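/- arXiv:1909.05153 — 9 statements merged into one kernel-verified Lean document; each statement's English description precedes it below -/
import Mathlib

section
/- Let Z be a tree shift on the k-ary tree over a finite alphabet A. Then the sequence n ↦ (log p_Z(n))/|Δ_n| converges, and its limit equals its infimum: lim_{n→∞} (log p_Z(n))/(1+k+⋯+k^n) = inf_{n} (log p_Z(n))/(1+k+⋯+k^n). -/
open Filter

namespace TreeEntropyAux

variable {k : ℕ} {A : Type} [Fintype A] [Nonempty A]

/-- The set of depth-`n` patterns of the tree shift `Z`. -/
def pat (Z : Set (List (Fin k) → A)) (n : ℕ) :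
    Set ({w : List (Fin k) // w.length ≤ n} → A) :=
  {f | ∃ τ ∈ Z, ∀ w, f w = τ w.val}

instance instFinLe (n : ℕ) : Finite {w : List (Fin k) // w.length ≤ n} :=
  (List.finite_length_le (Fin k) n).to_subtype

instance instFinEq (n : ℕ) : Finite {w : List (Fin k) // w.length = n} :=
  (List.finite_length_eq (Fin k) n).to_subtype

lemma pat_nonempty (Z : Set (List (Fin k) → A)) (hZ : Z.Nonempty) (n : ℕ) :
    Nonempty ↥(pat Z n) := by
  obtain ⟨τ, hτ⟩ := hZ
  exact ⟨⟨fun w => τ w.val, τ, hτ, fun _ => rfl⟩⟩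

lemma shift_mem (Z : Set (List (Fin k) → A))
    (hinv : ∀ s : Fin k, ∀ τ ∈ Z, (fun w => τ (s :: w)) ∈ Z)
    (w : List (Fin k)) : ∀ τ ∈ Z, (fun v => τ (w ++ v)) ∈ Z := by
  induction w with
  | nil => intro τ hτ; simpa using hτ
  | cons s w' ih => intro τ hτ; exact ih (fun u => τ (s :: u)) (hinv s τ hτ)

lemma card_mono (Z : Set (List (Fin k) → A)) {r m : ℕ} (h : r ≤ m) :
    Nat.card ↥(pat Z r) ≤ Nat.card ↥(pat Z m) := by
  apply Nat.card_le_card_of_surjective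
    (fun f : ↥(pat Z m) =>
      (⟨fun w => f.1 ⟨w.1, w.2.trans h⟩, by
        obtain ⟨τ, hτ, hfτ⟩ := f.2
        exact ⟨τ, hτ, fun w => hfτ _⟩⟩ : ↥(pat Z r)))
  rintro ⟨g, τ, hτ, hg⟩
  refine ⟨⟨fun w => τ w.1, τ, hτ, fun _ => rfl⟩, ?_⟩
  apply Subtype.ext
  funext w
  exact (hg w).symm

lemma key (Z : Set (List (Fin k) → A))
    (hinv : ∀ s : Fin k, ∀ τ ∈ Z, (fun w => τ (s :: w)) ∈ Z) (i m : ℕ) :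
    Nat.card ↥(pat Z (i + m + 1)) ≤
      Nat.card ↥(pat Z i) * Nat.card ↥(pat Z m) ^ k ^ (i + 1) := by
  classical
  have hcard : Nat.card {w : List (Fin k) // w.length = i + 1} = k ^ (i + 1) := by
    have : Nat.card (List.Vector (Fin k) (i + 1)) = k ^ (i + 1) := by
      simp [Nat.card_eq_fintype_card]
    exact this
  have hinj : ∃ Φ : ↥(pat Z (i + m + 1)) →
      ↥(pat Z i) × ({w : List (Fin k) // w.length = i + 1} → ↥(pat Z m)),
      Function.Injective Φ := by
    refine ⟨fun f =>
      ⟨⟨fun w => f.1 ⟨w.1, by have := w.2; omega⟩, ?_⟩,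
       fun w => ⟨fun v => f.1 ⟨w.1 ++ v.1, by
            have h1 := w.2; have h2 := v.2
            rw [List.length_append]; omega⟩, ?_⟩⟩, ?_⟩
    · obtain ⟨τ, hτ, hfτ⟩ := f.2
      exact ⟨τ, hτ, fun u => hfτ _⟩
    · obtain ⟨τ, hτ, hfτ⟩ := f.2
      exact ⟨fun v => τ (w.1 ++ v), shift_mem Z hinv w.1 τ hτ, fun v => hfτ _⟩
    · intro f g hfg
      apply Subtype.ext
      funext u
      by_cases hu : u.1.length ≤ i
      · exact congrArg (fun q => q.fst.1 ⟨u.1, hu⟩) hfg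
      · push_neg at hu
        have hw : (u.1.take (i + 1)).length = i + 1 := by
          rw [List.length_take]; omega
        have hv : (u.1.drop (i + 1)).length ≤ m := by
          rw [List.length_drop]; have := u.2; omega
        have h3 := congrArg
          (fun q => (q.snd ⟨u.1.take (i + 1), hw⟩).1 ⟨u.1.drop (i + 1), hv⟩) hfg
        have hu' : u = ⟨u.1.take (i + 1) ++ u.1.drop (i + 1), by
            rw [List.take_append_drop]; exact u.2⟩ :=
          Subtype.ext (List.take_append_drop _ _).symm
        rw [hu']
        exact h3
  obtain ⟨Φ, hΦ⟩ := hinj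
  calc Nat.card ↥(pat Z (i + m + 1))
      ≤ Nat.card (↥(pat Z i) × ({w : List (Fin k) // w.length = i + 1} → ↥(pat Z m))) :=
        Nat.card_le_card_of_injective Φ hΦ
    _ = Nat.card ↥(pat Z i) * Nat.card ↥(pat Z m) ^ k ^ (i + 1) := by
        rw [Nat.card_prod, Nat.card_fun, hcard]

/-- The real quantities. -/
noncomputable def aZ (Z : Set (List (Fin k) → A)) (n : ℕ) : ℝ :=
  Real.log (Nat.card ↥(pat Z n))

noncomputable def Dk (k : ℕ) (n : ℕ) : ℝ := ∑ i ∈ Finset.range (n + 1), (k : ℝ) ^ i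

lemma Dk_succ (n : ℕ) : Dk k (n + 1) = Dk k n + (k : ℝ) ^ (n + 1) :=
  Finset.sum_range_succ _ _

lemma Dk_add (n m : ℕ) : Dk k (n + m + 1) = Dk k n + (k : ℝ) ^ (n + 1) * Dk k m := by
  induction m with
  | zero =>
      rw [show n + 0 + 1 = n + 1 from rfl, Dk_succ]
      simp [Dk]
  | succ m ih =>
      rw [show n + (m + 1) + 1 = (n + m + 1) + 1 from rfl, Dk_succ, ih, Dk_succ]
      ring

lemma Dk_pos (hk : 2 ≤ k) (n : ℕ) : 0 < Dk k n := by
  have hk0 : (0 : ℝ) < (k : ℝ) := by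
    have : 0 < k := by omega
    exact_mod_cast this
  exact Finset.sum_pos (fun i _ => pow_pos hk0 i) ⟨0, Finset.mem_range.2 (Nat.succ_pos n)⟩

lemma aZ_nonneg (Z : Set (List (Fin k) → A)) (hZ : Z.Nonempty) (n : ℕ) :
    0 ≤ aZ Z n := by
  haveI := pat_nonempty Z hZ n
  have h1 : 1 ≤ Nat.card ↥(pat Z n) := Nat.card_pos
  exact Real.log_nonneg (by exact_mod_cast h1)

lemma aZ_mono (Z : Set (List (Fin k) → A)) (hZ : Z.Nonempty) {r m : ℕ} (h : r ≤ m) :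
    aZ Z r ≤ aZ Z m := by
  haveI := pat_nonempty Z hZ r
  have h1 : (0 : ℝ) < (Nat.card ↥(pat Z r) : ℝ) := by exact_mod_cast Nat.card_pos
  exact Real.log_le_log h1 (by exact_mod_cast card_mono Z h)

lemma aZ_key (Z : Set (List (Fin k) → A)) (hZ : Z.Nonempty)
    (hinv : ∀ s : Fin k, ∀ τ ∈ Z, (fun w => τ (s :: w)) ∈ Z) (n m : ℕ) :
    aZ Z (n + m + 1) ≤ aZ Z n + (k : ℝ) ^ (n + 1) * aZ Z m := by
  haveI := pat_nonempty Z hZ (n + m + 1)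
  haveI := pat_nonempty Z hZ n
  haveI := pat_nonempty Z hZ m
  have hPn : (0 : ℝ) < (Nat.card ↥(pat Z n) : ℝ) := by exact_mod_cast Nat.card_pos
  have hPm : (0 : ℝ) < (Nat.card ↥(pat Z m) : ℝ) := by exact_mod_cast Nat.card_pos
  have hP1 : (0 : ℝ) < (Nat.card ↥(pat Z (n + m + 1)) : ℝ) := by exact_mod_cast Nat.card_pos
  have h := key Z hinv n m
  calc aZ Z (n + m + 1)
      ≤ Real.log ((Nat.card ↥(pat Z n) : ℝ) * (Nat.card ↥(pat Z m) : ℝ) ^ k ^ (n + 1)) := by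
        apply Real.log_le_log hP1
        exact_mod_cast h
    _ = aZ Z n + (k : ℝ) ^ (n + 1) * aZ Z m := by
        rw [Real.log_mul hPn.ne' (by positivity), Real.log_pow]
        unfold aZ
        push_cast
        ring

lemma bound (Z : Set (List (Fin k) → A)) (hZ : Z.Nonempty)
    (hinv : ∀ s : Fin k, ∀ τ ∈ Z, (fun w => τ (s :: w)) ∈ Z) (hk : 2 ≤ k) (m n : ℕ) :
    aZ Z n / Dk k n ≤ aZ Z m / Dk k m + aZ Z m / Dk k n := by
  have hDm := Dk_pos (k := k) hk m
  have hDn := Dk_pos (k := k) hk n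
  have claim : ∀ q r, r ≤ m →
      aZ Z (q * (m + 1) + r) ≤
        (aZ Z m / Dk k m) * (Dk k (q * (m + 1) + r) - Dk k r) + aZ Z r := by
    intro q
    induction q with
    | zero => intro r hr; simp
    | succ q ih =>
        intro r hr
        have e : (q + 1) * (m + 1) + r = (q * (m + 1) + r) + m + 1 := by ring
        rw [e, Dk_add]
        have h1 := aZ_key Z hZ hinv (q * (m + 1) + r) m
        have h2 := ih r hr
        have h3 : aZ Z m / Dk k m * ((k : ℝ) ^ (q * (m + 1) + r + 1) * Dk k m)
            = (k : ℝ) ^ (q * (m + 1) + r + 1) * aZ Z m := by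
          field_simp
        calc aZ Z ((q * (m + 1) + r) + m + 1)
            ≤ aZ Z (q * (m + 1) + r) + (k : ℝ) ^ (q * (m + 1) + r + 1) * aZ Z m := h1
          _ ≤ (aZ Z m / Dk k m) * (Dk k (q * (m + 1) + r) - Dk k r) + aZ Z r
                + (k : ℝ) ^ (q * (m + 1) + r + 1) * aZ Z m := by linarith
          _ = (aZ Z m / Dk k m) *
                (Dk k (q * (m + 1) + r) + (k : ℝ) ^ (q * (m + 1) + r + 1) * Dk k m - Dk k r)
                + aZ Z r := by linear_combination -h3
  have hq := Nat.div_add_mod n (m + 1)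
  have hrm : n % (m + 1) ≤ m := Nat.lt_succ_iff.mp (Nat.mod_lt n (Nat.succ_pos m))
  have hn : (n / (m + 1)) * (m + 1) + n % (m + 1) = n := by rw [Nat.mul_comm]; exact hq
  have hc := claim (n / (m + 1)) (n % (m + 1)) hrm
  rw [hn] at hc
  have ham := aZ_nonneg Z hZ m
  have hDr := Dk_pos (k := k) hk (n % (m + 1))
  have h4 : (aZ Z m / Dk k m) * (Dk k n - Dk k (n % (m + 1))) ≤ (aZ Z m / Dk k m) * Dk k n :=
    mul_le_mul_of_nonneg_left (by linarith) (div_nonneg ham hDm.le)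
  have h5 : aZ Z (n % (m + 1)) ≤ aZ Z m := aZ_mono Z hZ hrm
  have h6 : aZ Z n ≤ (aZ Z m / Dk k m) * Dk k n + aZ Z m := by linarith
  rw [div_le_iff₀ hDn]
  have h7 : aZ Z m / Dk k n * Dk k n = aZ Z m := div_mul_cancel₀ _ hDn.ne'
  calc aZ Z n ≤ (aZ Z m / Dk k m) * Dk k n + aZ Z m := h6
    _ = (aZ Z m / Dk k m + aZ Z m / Dk k n) * Dk k n := by rw [add_mul, h7]

lemma tendsto_inf (a D : ℕ → ℝ) (hD : ∀ n, 0 < D n) (ha : ∀ n, 0 ≤ a n)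
    (hb : ∀ m n, a n / D n ≤ a m / D m + a m / D n)
    (hDtop : Tendsto D atTop atTop) :
    Tendsto (fun n => a n / D n) atTop (nhds (⨅ n, a n / D n)) := by
  set b := fun n => a n / D n with hbdef
  have hb0 : ∀ n, 0 ≤ b n := fun n => div_nonneg (ha n) (hD n).le
  have hbdd : BddBelow (Set.range b) := ⟨0, by rintro x ⟨n, rfl⟩; exact hb0 n⟩
  have hLle : ∀ n, (⨅ n, b n) ≤ b n := fun n => ciInf_le hbdd n
  rw [tendsto_order]
  constructor
  · intro c hc
    exact Eventually.of_forall fun n => lt_of_lt_of_le hc (hLle n)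
  · intro c hc
    obtain ⟨m, hm⟩ := exists_lt_of_ciInf_lt
      (show (⨅ n, b n) < ((⨅ n, b n) + c) / 2 by linarith)
    have h0 : Tendsto (fun n => a m / D n) atTop (nhds 0) :=
      Tendsto.div_atTop tendsto_const_nhds hDtop
    have hev := h0.eventually (gt_mem_nhds (show (0 : ℝ) < (c - (⨅ n, b n)) / 2 by linarith))
    filter_upwards [hev] with n hn
    have h1 := hb m n
    calc b n ≤ b m + a m / D n := h1
      _ < c := by linarith

end TreeEntropyAux

/-- The limit in the definition of tree shift topological entropy exists and
equals the infimum of the sequence `n ↦ log p_Z(n) / (1 + k + ⋯ + kⁿ)`. -/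
theorem tree_entropy_lim_eq_inf
    (k : ℕ) (hk : 2 ≤ k) (A : Type) [Fintype A] [Nonempty A]
    (Z : Set (List (Fin k) → A)) (hZ : Z.Nonempty)
    (hinv : ∀ s : Fin k, ∀ τ ∈ Z, (fun w => τ (s :: w)) ∈ Z) :
    Tendsto
      (fun n : ℕ =>
        Real.log (Nat.card {f : {w : List (Fin k) // w.length ≤ n} → A |
            ∃ τ ∈ Z, ∀ w, f w = τ w.val}) /
          ∑ i ∈ Finset.range (n + 1), (k : ℝ) ^ i)
      atTop
      (nhds (⨅ n : ℕ,
        Real.log (Nat.card {f : {w : List (Fin k) // w.length ≤ n} → A |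
            ∃ τ ∈ Z, ∀ w, f w = τ w.val}) /
          ∑ i ∈ Finset.range (n + 1), (k : ℝ) ^ i)) := by
  have hpat : ∀ n : ℕ, {f : {w : List (Fin k) // w.length ≤ n} → A |
      ∃ τ ∈ Z, ∀ w, f w = τ w.val} = TreeEntropyAux.pat Z n := fun _ => rfl
  simp only [hpat]
  have hk1 : (1 : ℝ) ≤ (k : ℝ) := by exact_mod_cast (by omega : 1 ≤ k)
  have hDge : ∀ n : ℕ, ((n : ℝ) + 1) ≤ TreeEntropyAux.Dk k n := by
    intro n
    calc ((n : ℝ) + 1) = ∑ _i ∈ Finset.range (n + 1), (1 : ℝ) := by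
          rw [Finset.sum_const, Finset.card_range]; simp
      _ ≤ ∑ i ∈ Finset.range (n + 1), (k : ℝ) ^ i :=
          Finset.sum_le_sum fun i _ => one_le_pow₀ hk1
  have hDtop : Tendsto (TreeEntropyAux.Dk k) atTop atTop :=
    tendsto_atTop_mono hDge
      (tendsto_atTop_add_const_right _ 1 tendsto_natCast_atTop_atTop)
  exact TreeEntropyAux.tendsto_inf (TreeEntropyAux.aZ Z) (TreeEntropyAux.Dk k)
    (TreeEntropyAux.Dk_pos hk) (TreeEntropyAux.aZ_nonneg Z hZ)
    (TreeEntropyAux.bound Z hZ hinv hk) hDtop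
end

section
/- Let Z be a tree shift on the k-ary tree over a finite alphabet A. Then for all integers n ≥ 0 and j ≥ 1, p_Z(j(n+1)−1) ≤ p_Z(n)^{(k^{j(n+1)}−1)/(k^{n+1}−1)} (note the exponent (k^{j(n+1)}−1)/(k^{n+1}−1) = 1 + k^{n+1} + k^{2(n+1)} + ⋯ + k^{(j−1)(n+1)} is a positive integer). -/
section Aux

variable {k : ℕ} {A : Type} [Fintype A]
variable (Z : Set (List (Fin k) → A))

/-- The set of depth-`m` patterns of `Z`. -/
def Pat (m : ℕ) : Set ({w : List (Fin k) // w.length ≤ m} → A) :=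
  {f | ∃ τ ∈ Z, ∀ w, f w = τ w.val}

instance instFinLen (m : ℕ) : Finite {w : List (Fin k) // w.length ≤ m} :=
  (List.finite_length_le (Fin k) m)

instance instFinPat (m : ℕ) : Finite (Pat Z m) :=
  Subtype.finite

lemma shift_mem (hinv : ∀ s : Fin k, ∀ τ ∈ Z, (fun w => τ (s :: w)) ∈ Z) :
    ∀ (u : List (Fin k)), ∀ τ ∈ Z, (fun w => τ (u ++ w)) ∈ Z := by
  intro u
  induction u with
  | nil => intro τ hτ; simpa using hτ
  | cons s u ih =>
    intro τ hτ
    simpa using ih (fun w => τ (s :: w)) (hinv s τ hτ)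

lemma step (hinv : ∀ s : Fin k, ∀ τ ∈ Z, (fun w => τ (s :: w)) ∈ Z) (n m : ℕ) :
    Nat.card (Pat Z (m + (n + 1))) ≤
      Nat.card (Pat Z n) * (Nat.card (Pat Z m)) ^ (k ^ (n + 1)) := by
  -- build an injection into the product
  have hinj : ∃ F : Pat Z (m + (n + 1)) →
      (Pat Z n) × (List.Vector (Fin k) (n + 1) → Pat Z m), Function.Injective F := by
    refine ⟨fun f => ⟨⟨fun w => f.val ⟨w.val, by omega⟩, ?_⟩,
      fun u => ⟨fun w => f.val ⟨u.val ++ w.val, by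
        have := u.prop; have := w.prop; simp only [List.length_append]; omega⟩, ?_⟩⟩, ?_⟩
    · obtain ⟨τ, hτ, hfτ⟩ := f.prop
      exact ⟨τ, hτ, fun w => hfτ _⟩
    · obtain ⟨τ, hτ, hfτ⟩ := f.prop
      exact ⟨fun w => τ (u.val ++ w), shift_mem Z hinv u.val τ hτ, fun w => hfτ _⟩
    · intro f g hfg
      obtain ⟨h1, h2⟩ := Prod.mk.injEq .. ▸ hfg
      apply Subtype.ext
      funext w
      obtain ⟨w, hw⟩ := w
      by_cases hlen : w.length ≤ n
      · have := congrFun (congrArg Subtype.val h1) ⟨w, hlen⟩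
        simpa using this
      · -- split w = take (n+1) w ++ drop (n+1) w
        have hwlen : n + 1 ≤ w.length := by omega
        have hu : (w.take (n + 1)).length = n + 1 := by
          simp [List.length_take]; omega
        have h2' := congrFun h2 ⟨w.take (n + 1), hu⟩
        have h3 := congrFun (congrArg Subtype.val h2') ⟨w.drop (n + 1), by
          simp [List.length_drop]; omega⟩
        simp only at h3
        have he : w.take (n + 1) ++ w.drop (n + 1) = w := List.take_append_drop _ _
        have hf : f.val ⟨w, hw⟩ = f.val ⟨w.take (n + 1) ++ w.drop (n + 1), by
            rw [he]; exact hw⟩ := congrArg f.val (Subtype.ext he.symm)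
        have hg : g.val ⟨w, hw⟩ = g.val ⟨w.take (n + 1) ++ w.drop (n + 1), by
            rw [he]; exact hw⟩ := congrArg g.val (Subtype.ext he.symm)
        rw [hf, hg]; exact h3
  obtain ⟨F, hF⟩ := hinj
  calc Nat.card (Pat Z (m + (n + 1)))
      ≤ Nat.card ((Pat Z n) × (List.Vector (Fin k) (n + 1) → Pat Z m)) :=
        Nat.card_le_card_of_injective F hF
    _ = Nat.card (Pat Z n) * (Nat.card (Pat Z m)) ^ (k ^ (n + 1)) := by
        rw [Nat.card_prod, Nat.card_fun]
        congr 2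
        rw [Nat.card_eq_fintype_card, card_vector, Fintype.card_fin]

end Aux

/-- For a tree shift `Z` on the `k`-ary tree, for all `n ≥ 0` and `j ≥ 1`,
`p_Z(j(n+1)−1) ≤ p_Z(n) ^ (1 + k^{n+1} + k^{2(n+1)} + ⋯ + k^{(j−1)(n+1)})`. -/
theorem tree_complexity_power_bound
    (k : ℕ) (hk : 2 ≤ k) (A : Type) [Fintype A] [Nonempty A]
    (Z : Set (List (Fin k) → A)) (hZ : Z.Nonempty)
    (hinv : ∀ s : Fin k, ∀ τ ∈ Z, (fun w => τ (s :: w)) ∈ Z)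
    (n j : ℕ) (hj : 1 ≤ j) :
    Nat.card {f : {w : List (Fin k) // w.length ≤ j * (n + 1) - 1} → A |
        ∃ τ ∈ Z, ∀ w, f w = τ w.val}
      ≤ (Nat.card {f : {w : List (Fin k) // w.length ≤ n} → A |
          ∃ τ ∈ Z, ∀ w, f w = τ w.val}) ^
        ∑ i ∈ Finset.range j, k ^ ((n + 1) * i) := by
  show Nat.card (Pat Z (j * (n + 1) - 1)) ≤
    (Nat.card (Pat Z n)) ^ ∑ i ∈ Finset.range j, k ^ ((n + 1) * i)
  induction j, hj using Nat.le_induction with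
  | base =>
    have h : 1 * (n + 1) - 1 = n := by omega
    rw [h]; simp
  | succ j hj ih =>
    have hkey : (j + 1) * (n + 1) - 1 = (j * (n + 1) - 1) + (n + 1) := by
      have h1 : 1 ≤ j * (n + 1) := Nat.le_mul_of_pos_right _ (Nat.succ_pos n) |>.trans'
        (by omega) |>.trans_eq' rfl
      have h2 : (j + 1) * (n + 1) = j * (n + 1) + (n + 1) := Nat.succ_mul _ _
      omega
    rw [hkey]
    calc Nat.card (Pat Z ((j * (n + 1) - 1) + (n + 1)))
        ≤ Nat.card (Pat Z n) * (Nat.card (Pat Z (j * (n + 1) - 1))) ^ (k ^ (n + 1)) :=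
          step Z hinv n _
      _ ≤ Nat.card (Pat Z n) *
          ((Nat.card (Pat Z n)) ^ ∑ i ∈ Finset.range j, k ^ ((n + 1) * i)) ^ (k ^ (n + 1)) :=
          Nat.mul_le_mul_left _ (Nat.pow_le_pow_left ih _)
      _ = (Nat.card (Pat Z n)) ^ ∑ i ∈ Finset.range (j + 1), k ^ ((n + 1) * i) := by
          rw [← pow_mul, ← pow_succ']
          congr 1
          rw [Finset.sum_range_succ']
          simp [Nat.mul_succ, pow_add, ← Finset.sum_mul]
end

section
/- For every integer k ≥ 2, the sequence n ↦ (k−1)·(log B_n)/(k^{n+1}−1) converges to a limit h^{(k)} (the entropy of the golden mean k-tree shift), and the site-specific strip approximation entropies h_n^{(k)} = (log λ_{n−1})/k^n also converge to h^{(k)} as n → ∞. -/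
open Filter

/-- `(B_n(0), B_n(1))`: the number of hard-core labelings of the complete rooted
`k`-ary tree of height `n` with root label `0`, resp. `1`. -/
noncomputable def Bp (k : ℕ) : ℕ → ℝ × ℝ
  | 0 => (1, 1)
  | n + 1 => (((Bp k n).1 + (Bp k n).2) ^ k, (Bp k n).1 ^ k)

/-- `B_n = B_n(0) + B_n(1)`. -/
noncomputable def Bt (k n : ℕ) : ℝ := (Bp k n).1 + (Bp k n).2

/-- `r_n = B_n(0) / B_n`. -/
noncomputable def rt (k n : ℕ) : ℝ := (Bp k n).1 / Bt k n

/-- `c_n = (1 + √(1 + 4 r_n^{k−1}))/2`. -/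
noncomputable def ct (k n : ℕ) : ℝ := (1 + Real.sqrt (1 + 4 * rt k n ^ (k - 1))) / 2

/-- `λ_n = B_n^{k−1} c_n`. -/
noncomputable def lamt (k n : ℕ) : ℝ := Bt k n ^ (k - 1) * ct k n


section aux

variable (k : ℕ) (hk : 2 ≤ k)

lemma Bp_bounds : ∀ n, 1 ≤ (Bp k n).2 ∧ (Bp k n).2 ≤ (Bp k n).1 := by
  intro n
  induction n with
  | zero => simp [Bp]
  | succ n ih =>
    obtain ⟨h1, h2⟩ := ih
    have hx : (1:ℝ) ≤ (Bp k n).1 := le_trans h1 h2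
    constructor
    · show (1:ℝ) ≤ (Bp k n).1 ^ k
      exact one_le_pow₀ hx
    · show (Bp k n).1 ^ k ≤ ((Bp k n).1 + (Bp k n).2) ^ k
      exact pow_le_pow_left₀ (by linarith) (by linarith) k

lemma Bt_ge_two (n : ℕ) : 2 ≤ Bt k n := by
  obtain ⟨h1, h2⟩ := Bp_bounds k n
  unfold Bt; linarith

lemma Bt_pos (n : ℕ) : 0 < Bt k n := lt_of_lt_of_le two_pos (Bt_ge_two k n)

lemma rt_nonneg (n : ℕ) : 0 ≤ rt k n := by
  obtain ⟨h1, h2⟩ := Bp_bounds k n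
  exact div_nonneg (by linarith) (Bt_pos k n).le

lemma rt_le_one (n : ℕ) : rt k n ≤ 1 := by
  obtain ⟨h1, h2⟩ := Bp_bounds k n
  rw [rt, div_le_one (Bt_pos k n)]
  unfold Bt; linarith

lemma Bt_rec (n : ℕ) : Bt k (n+1) = Bt k n ^ k * (1 + rt k n ^ k) := by
  have hB := (Bt_pos k n).ne'
  show ((Bp k n).1 + (Bp k n).2) ^ k + (Bp k n).1 ^ k = _
  have h2 : Bt k n ^ k * (rt k n ^ k) = (Bp k n).1 ^ k := by
    rw [rt, div_pow, mul_comm, div_mul_cancel₀ _ (pow_ne_zero k hB)]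
  rw [mul_add, mul_one, h2]
  rfl

lemma log_rec (n : ℕ) : Real.log (Bt k (n+1))
    = k * Real.log (Bt k n) + Real.log (1 + rt k n ^ k) := by
  have h1 : (0:ℝ) < 1 + rt k n ^ k := by
    have := pow_nonneg (rt_nonneg k n) k; linarith
  rw [Bt_rec, Real.log_mul (pow_ne_zero k (Bt_pos k n).ne') h1.ne', Real.log_pow]

end aux

/-- For every `k ≥ 2`, the sequence `(k−1)·log B_n/(k^{n+1}−1)` converges to a limit
`h^{(k)}`, and the site-specific strip entropies `h_n^{(k)} = log λ_{n−1}/kⁿ`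
(indexed here by `n+1`) converge to the same limit. -/
theorem strip_entropies_tendsto_tree_entropy (k : ℕ) (hk : 2 ≤ k) :
    ∃ h : ℝ,
      Tendsto (fun n : ℕ => ((k : ℝ) - 1) * Real.log (Bt k n) / ((k : ℝ) ^ (n + 1) - 1))
        atTop (nhds h) ∧
      Tendsto (fun n : ℕ => Real.log (lamt k n) / (k : ℝ) ^ (n + 1)) atTop (nhds h) := by
  have hk1 : (1:ℝ) < (k:ℝ) := by exact_mod_cast hk.trans_lt' one_lt_two
  have hk0 : (0:ℝ) < k := by linarith
  set d : ℕ → ℝ := fun n => Real.log (Bt k n) / (k:ℝ) ^ n with hd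
  have hkpow : ∀ n : ℕ, (0:ℝ) < (k:ℝ) ^ n := fun n => pow_pos hk0 n
  have hstep : ∀ n, d (n+1) = d n + Real.log (1 + rt k n ^ k) / (k:ℝ) ^ (n+1) := by
    intro n
    simp only [hd]
    rw [log_rec]
    field_simp
    ring
  have hlog_nonneg : ∀ n, 0 ≤ Real.log (1 + rt k n ^ k) := by
    intro n
    apply Real.log_nonneg
    have := pow_nonneg (rt_nonneg k n) k
    linarith
  have hlog_le : ∀ n, Real.log (1 + rt k n ^ k) ≤ Real.log 2 := by
    intro n
    have h0 := pow_nonneg (rt_nonneg k n) k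
    have h1 : rt k n ^ k ≤ 1 := pow_le_one₀ (rt_nonneg k n) (rt_le_one k n)
    apply Real.log_le_log (by linarith)
    linarith
  have hmono : Monotone d := by
    apply monotone_nat_of_le_succ
    intro n
    rw [hstep n]
    have := div_nonneg (hlog_nonneg n) (hkpow (n+1)).le
    linarith
  have hub : ∀ n, d n ≤ 2 * Real.log 2 - Real.log 2 / (k:ℝ) ^ n := by
    intro n
    induction n with
    | zero =>
      simp only [hd]
      have : Bt k 0 = 2 := by norm_num [Bt, Bp]
      rw [this]
      simp only [pow_zero, div_one]
      linarith
    | succ n ih =>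
      rw [hstep n]
      have h2 : Real.log (1 + rt k n ^ k) / (k:ℝ) ^ (n+1) ≤ Real.log 2 / (k:ℝ) ^ (n+1) :=
        (div_le_div_iff_of_pos_right (hkpow (n+1))).2 (hlog_le n)
      have hl2 : (0:ℝ) ≤ Real.log 2 := Real.log_nonneg (by norm_num)
      have hk2 : (2:ℝ) ≤ (k:ℝ) := by exact_mod_cast hk
      have h3 : 2 * (Real.log 2 / (k:ℝ) ^ (n+1)) ≤ Real.log 2 / (k:ℝ) ^ n := by
        rw [pow_succ, mul_div_assoc', div_le_div_iff₀ (by positivity) (hkpow n)]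
        nlinarith [mul_nonneg (mul_nonneg hl2 (hkpow n).le) (sub_nonneg.2 hk2)]
      linarith
  have hbdd : BddAbove (Set.range d) := by
    refine ⟨2 * Real.log 2, ?_⟩
    rintro x ⟨n, rfl⟩
    have := hub n
    have := div_nonneg (Real.log_nonneg (by norm_num : (1:ℝ) ≤ 2)) (hkpow n).le
    linarith
  set L : ℝ := ⨆ n, d n with hL
  have hdL : Tendsto d atTop (nhds L) := tendsto_atTop_ciSup hmono hbdd
  refine ⟨((k:ℝ) - 1) / k * L, ?_, ?_⟩
  · have hfac : Tendsto (fun n : ℕ => ((k:ℝ) - 1) / ((k:ℝ) - (1/(k:ℝ))^n)) atTop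
        (nhds (((k:ℝ) - 1) / (k:ℝ))) := by
      have hgeo : Tendsto (fun n : ℕ => (1/(k:ℝ))^n) atTop (nhds 0) := by
        apply tendsto_pow_atTop_nhds_zero_of_lt_one (by positivity)
        rw [div_lt_one hk0]  -- 1/k < 1
        linarith
      have : Tendsto (fun n : ℕ => (k:ℝ) - (1/(k:ℝ))^n) atTop (nhds ((k:ℝ) - 0)) :=
        tendsto_const_nhds.sub hgeo
      rw [sub_zero] at this
      exact tendsto_const_nhds.div this (by linarith)
    have := hdL.mul hfac
    have heq : ∀ n : ℕ, d n * (((k:ℝ) - 1) / ((k:ℝ) - (1/(k:ℝ))^n))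
        = ((k : ℝ) - 1) * Real.log (Bt k n) / ((k : ℝ) ^ (n + 1) - 1) := by
      intro n
      simp only [hd]
      have hden : (k:ℝ)^n * ((k:ℝ) - (1/(k:ℝ))^n) = (k:ℝ)^(n+1) - 1 := by
        rw [mul_sub, ← mul_pow, mul_one_div_cancel hk0.ne', one_pow, pow_succ]
      rw [div_mul_div_comm, hden, mul_comm (Real.log (Bt k n))]
    rw [show ((k:ℝ)-1)/k * L = L * (((k:ℝ)-1)/k) by ring]
    exact this.congr heq
  · have hct_mem : ∀ n, 1 ≤ ct k n ∧ ct k n ≤ 2 := by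
      intro n
      have h0 : (0:ℝ) ≤ rt k n ^ (k-1) := pow_nonneg (rt_nonneg k n) _
      have h1 : rt k n ^ (k-1) ≤ 1 := pow_le_one₀ (n := k-1) (rt_nonneg k n) (rt_le_one k n)
      constructor
      · rw [ct, le_div_iff₀ (by norm_num : (0:ℝ) < 2)]
        have hs := Real.sqrt_le_sqrt (show (1:ℝ) ≤ 1 + 4 * rt k n ^ (k-1) by linarith)
        rw [Real.sqrt_one] at hs
        linarith
      · rw [ct, div_le_iff₀ (by norm_num : (0:ℝ) < 2)]
        have hs := Real.sqrt_le_sqrt (show 1 + 4 * rt k n ^ (k-1) ≤ 9 by linarith)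
        rw [show (9:ℝ) = 3^2 by norm_num, Real.sqrt_sq (by norm_num : (0:ℝ) ≤ 3)] at hs
        linarith
    have hlam : ∀ n, Real.log (lamt k n) / (k:ℝ)^(n+1)
        = ((k:ℝ)-1)/k * d n + Real.log (ct k n) / (k:ℝ)^(n+1) := by
      intro n
      have hc : (0:ℝ) < ct k n := lt_of_lt_of_le one_pos (hct_mem n).1
      rw [lamt, Real.log_mul (pow_ne_zero _ (Bt_pos k n).ne') hc.ne', Real.log_pow]
      have hcast : ((k - 1 : ℕ) : ℝ) = (k:ℝ) - 1 := by
        push_cast [Nat.cast_sub (le_trans one_le_two hk)]; ring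
      rw [hcast]
      simp only [hd]
      rw [pow_succ]
      field_simp
    have h1 : Tendsto (fun n => ((k:ℝ)-1)/k * d n) atTop (nhds (((k:ℝ)-1)/k * L)) :=
      hdL.const_mul _
    have h2 : Tendsto (fun n => Real.log (ct k n) / (k:ℝ)^(n+1)) atTop (nhds 0) := by
      refine squeeze_zero (g := fun n : ℕ => Real.log 2 / (k:ℝ)^(n+1))
        (fun n => div_nonneg (Real.log_nonneg (hct_mem n).1) (hkpow (n+1)).le) (fun n => ?_) ?_
      · exact (div_le_div_iff_of_pos_right (hkpow (n+1))).2
          (Real.log_le_log (lt_of_lt_of_le one_pos (hct_mem n).1) (hct_mem n).2)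
      · have hgeo : Tendsto (fun n : ℕ => (1/(k:ℝ))^n) atTop (nhds 0) := by
          apply tendsto_pow_atTop_nhds_zero_of_lt_one (by positivity)
          rw [div_lt_one hk0]; linarith
        have hgeo' : Tendsto (fun n : ℕ => (1/(k:ℝ))^(n+1)) atTop (nhds 0) :=
          (Filter.tendsto_add_atTop_iff_nat 1).2 hgeo
        have := hgeo'.const_mul (Real.log 2)
        rw [mul_zero] at this
        apply this.congr
        intro n
        rw [div_pow, one_pow, mul_one_div]
    have := h1.add h2
    rw [add_zero] at this
    exact this.congr (fun n => (hlam n).symm)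
end

section
/- For every integer k ≥ 6, 2^{(k−1)/k + ((k−1)/k)³} > 1 + (1 + 2^{−(k−1)})^{k−1}. -/
lemma aux_pow (n : ℕ) (hn : 5 ≤ n) : 32 * n ≤ 5 * 2 ^ n := by
  induction n with
  | zero => omega
  | succ m ih =>
    rcases Nat.lt_or_ge m 5 with h | h
    · interval_cases m <;> simp_all <;> norm_num
    · have := ih h
      have h32 : 32 ≤ 5 * 2 ^ m := by
        calc 32 ≤ 32 * m := by omega
        _ ≤ 5 * 2 ^ m := this
      calc 32 * (m + 1) = 32 * m + 32 := by ring
        _ ≤ 5 * 2 ^ m + 5 * 2 ^ m := by omega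
        _ = 5 * 2 ^ (m + 1) := by ring

/-- For every integer `k ≥ 6`, `2^{(k−1)/k + ((k−1)/k)³} > 1 + (1+2^{−(k−1)})^{k−1}`. -/
theorem key_inequality (k : ℕ) (hk : 6 ≤ k) :
    (2 : ℝ) ^ (((k : ℝ) - 1) / k + (((k : ℝ) - 1) / k) ^ 3)
      > 1 + (1 + (2 : ℝ) ^ (-((k : ℝ) - 1))) ^ ((k : ℝ) - 1) := by
  have hk6 : (6 : ℝ) ≤ (k : ℝ) := by exact_mod_cast hk
  have hkpos : (0 : ℝ) < (k : ℝ) := by linarith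
  set t : ℝ := (k : ℝ) - 1 with ht_def
  have ht5 : (5 : ℝ) ≤ t := by simp [ht_def]; linarith
  have ht0 : (0 : ℝ) ≤ t := by linarith
  -- bound on 2^(-t)
  have h2t_pos : (0 : ℝ) < (2 : ℝ) ^ (-t) := Real.rpow_pos_of_pos (by norm_num) _
  -- key: t * 2^(-t) ≤ 5/32
  have hcast : ((k - 1 : ℕ) : ℝ) = t := by
    have : (1:ℕ) ≤ k := by omega
    push_cast [this]; ring
  have h2t_eq : (2 : ℝ) ^ t = ((2 : ℕ) ^ (k - 1) : ℕ) := by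
    rw [← hcast]
    push_cast
    rw [Real.rpow_natCast]
  have hnat : 32 * (k - 1) ≤ 5 * 2 ^ (k - 1) := aux_pow (k - 1) (by omega)
  have hkey : (2 : ℝ) ^ (-t) * t ≤ 5 / 32 := by
    have hnatR : 32 * t ≤ 5 * (2 : ℝ) ^ t := by
      rw [h2t_eq, ← hcast]
      exact_mod_cast hnat
    rw [Real.rpow_neg (by norm_num)]
    rw [inv_mul_eq_div, div_le_div_iff₀ (Real.rpow_pos_of_pos (by norm_num) _) (by norm_num)]
    linarith
  -- RHS bound: (1 + 2^(-t))^t ≤ exp(2^(-t))^t = exp(2^(-t) * t) ≤ exp(5/32) ≤ 32/27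
  have hb1 : (1 + (2 : ℝ) ^ (-t)) ^ t ≤ (Real.exp ((2:ℝ) ^ (-t))) ^ t := by
    apply Real.rpow_le_rpow (by positivity) _ ht0
    linarith [Real.add_one_le_exp ((2:ℝ) ^ (-t))]
  have hb2 : (Real.exp ((2:ℝ) ^ (-t))) ^ t = Real.exp ((2:ℝ) ^ (-t) * t) := by
    rw [← Real.exp_one_rpow ((2:ℝ)^(-t)), ← Real.rpow_mul (le_of_lt (Real.exp_pos 1)),
      Real.exp_one_rpow]
  have hb3 : Real.exp ((2:ℝ) ^ (-t) * t) ≤ Real.exp (5/32) := Real.exp_le_exp.mpr hkey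
  have hb4 : Real.exp (5/32 : ℝ) ≤ 32/27 := by
    have h1 : (27/32 : ℝ) ≤ Real.exp (-(5/32)) := by
      have := Real.add_one_le_exp (-(5/32) : ℝ)
      linarith
    have h2 : Real.exp (5/32 : ℝ) = (Real.exp (-(5/32)))⁻¹ := by
      rw [← Real.exp_neg]; norm_num
    rw [h2]
    rw [inv_le_comm₀ (Real.exp_pos _) (by norm_num)]
    linarith
  have hRHS : 1 + (1 + (2 : ℝ) ^ (-t)) ^ t ≤ 59/27 := by
    have : (1 + (2 : ℝ) ^ (-t)) ^ t ≤ 32/27 := by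
      calc (1 + (2 : ℝ) ^ (-t)) ^ t ≤ (Real.exp ((2:ℝ) ^ (-t))) ^ t := hb1
        _ = Real.exp ((2:ℝ) ^ (-t) * t) := hb2
        _ ≤ Real.exp (5/32) := hb3
        _ ≤ 32/27 := hb4
    linarith
  -- LHS bound
  set x : ℝ := ((k : ℝ) - 1) / k with hx_def
  have hx : (5/6 : ℝ) ≤ x := by
    rw [hx_def, le_div_iff₀ hkpos]
    linarith
  have hx3 : (5/6 : ℝ)^3 ≤ x^3 := by
    apply pow_le_pow_left₀ (by norm_num) hx
  have hexp : (7/6 : ℝ) ≤ x + x ^ 3 := by nlinarith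
  have hLHS : (2 : ℝ) ^ ((7:ℝ)/6) ≤ (2 : ℝ) ^ (x + x ^ 3) :=
    Real.rpow_le_rpow_of_exponent_le (by norm_num) hexp
  -- numeric: 59/27 < 2^(7/6)
  have hnum : (59/27 : ℝ) < (2 : ℝ) ^ ((7:ℝ)/6) := by
    have h6 : ((59/27 : ℝ)) ^ (6:ℕ) < ((2 : ℝ) ^ ((7:ℝ)/6)) ^ (6:ℕ) := by
      rw [← Real.rpow_natCast ((2:ℝ) ^ ((7:ℝ)/6)) 6, ← Real.rpow_mul (by norm_num)]
      norm_num
    have := pow_lt_pow_iff_left₀ (a := (59/27:ℝ)) (b := (2:ℝ) ^ ((7:ℝ)/6)) (n := 6)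
      (by norm_num) (by positivity) (by norm_num)
    exact this.mp h6
  calc 1 + (1 + (2 : ℝ) ^ (-t)) ^ t ≤ 59/27 := hRHS
    _ < (2 : ℝ) ^ ((7:ℝ)/6) := hnum
    _ ≤ (2 : ℝ) ^ (x + x ^ 3) := hLHS
end

section
/- For every real r ∈ [0,1], setting c = (1+√(1+4r))/2, one has c⁴ ≤ (1+r²)·(c²+1), with equality if and only if r³ + r − 1 = 0. -/
/-- Case `k = 2` of the strip-monotonicity inequality: for `r ∈ [0,1]` and
`c = (1+√(1+4r))/2`, one has `c⁴ ≤ (1+r²)(c²+1)`, with equality iff `r³+r−1 = 0`. -/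
theorem strip_inequality_k2 (r : ℝ) (hr : r ∈ Set.Icc (0 : ℝ) 1)
    (c : ℝ) (hc : c = (1 + Real.sqrt (1 + 4 * r)) / 2) :
    c ^ 4 ≤ (1 + r ^ 2) * (c ^ 2 + 1) ∧
      (c ^ 4 = (1 + r ^ 2) * (c ^ 2 + 1) ↔ r ^ 3 + r - 1 = 0) := by
  obtain ⟨hr0, hr1⟩ := hr
  set s := Real.sqrt (1 + 4 * r) with hs
  have hs0 : 0 ≤ s := Real.sqrt_nonneg _
  have hs2 : s ^ 2 = 1 + 4 * r := Real.sq_sqrt (by linarith)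
  have h2c : s = 2 * c - 1 := by rw [hc]; ring
  have hcc : c ^ 2 = c + r := by rw [hc]; linear_combination hs2 / 4
  have hL : 0 ≤ 2 - 2 * r + r ^ 2 + 2 * r ^ 3 := by nlinarith
  have hrs : 0 ≤ r * (2 - r) := by nlinarith
  have hb : 0 ≤ r * (2 - r) * s := mul_nonneg hrs hs0
  have hsq : (r * (2 - r) * s) ^ 2 ≤ (2 - 2 * r + r ^ 2 + 2 * r ^ 3) ^ 2 := by
    nlinarith [sq_nonneg (r ^ 3 + r - 1), hs2, sq_nonneg (r * (2 - r))]
  have hkey : r * (2 - r) * s ≤ 2 - 2 * r + r ^ 2 + 2 * r ^ 3 := by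
    nlinarith [hsq, hb, hL]
  have hDid : c ^ 4 - (1 + r ^ 2) * (c ^ 2 + 1) =
      (r * (2 - r) * s - (2 - 2 * r + r ^ 2 + 2 * r ^ 3)) / 2 := by
    linear_combination (c ^ 2 + c - r ^ 2 + r) * hcc - (r * (2 - r) / 2) * h2c
  refine ⟨by linarith, ?_, ?_⟩
  · intro h
    have hD : r * (2 - r) * s = 2 - 2 * r + r ^ 2 + 2 * r ^ 3 := by
      rw [h] at hDid; linarith
    have hz : (r ^ 3 + r - 1) ^ 2 = 0 := by
      linear_combination (-(2 - 2 * r + r ^ 2 + 2 * r ^ 3 + r * (2 - r) * s) / 4) * hD +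
        (r ^ 2 * (2 - r) ^ 2 / 4) * hs2
    exact pow_eq_zero_iff two_ne_zero |>.mp hz
  · intro hroot
    have h1 : (2 - 2 * r + r ^ 2 + 2 * r ^ 3) ^ 2 = (r * (2 - r) * s) ^ 2 := by
      linear_combination 4 * (r ^ 3 + r - 1) * hroot - r ^ 2 * (2 - r) ^ 2 * hs2
    have h2 : 2 - 2 * r + r ^ 2 + 2 * r ^ 3 ≤ r * (2 - r) * s := by
      nlinarith [h1, hb, hL]
    have : r * (2 - r) * s = 2 - 2 * r + r ^ 2 + 2 * r ^ 3 := le_antisymm hkey h2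
    linarith [hDid]
end

section
/- For every real r ∈ [0,1], setting c = (1+√(1+4r²))/2, one has c⁶ ≤ (1+r³)²·(c³+1), with equality if and only if r⁴ + r − 1 = 0. -/
/-- Case `k = 3` of the strip-monotonicity inequality: for `r ∈ [0,1]` and
`c = (1+√(1+4r²))/2`, one has `c⁶ ≤ (1+r³)²(c³+1)`, with equality iff `r⁴+r−1 = 0`. -/
theorem strip_inequality_k3 (r : ℝ) (hr : r ∈ Set.Icc (0 : ℝ) 1)
    (c : ℝ) (hc : c = (1 + Real.sqrt (1 + 4 * r ^ 2)) / 2) :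
    c ^ 6 ≤ (1 + r ^ 3) ^ 2 * (c ^ 3 + 1) ∧
      (c ^ 6 = (1 + r ^ 3) ^ 2 * (c ^ 3 + 1) ↔ r ^ 4 + r - 1 = 0) := by
  obtain ⟨hr0, hr1⟩ := hr
  set s : ℝ := Real.sqrt (1 + 4 * r ^ 2) with hsdef
  have hs0 : 0 ≤ s := Real.sqrt_nonneg _
  have hs2 : s ^ 2 = 1 + 4 * r ^ 2 := Real.sq_sqrt (by positivity)
  set P : ℝ := 2 - 3*r^2 + 6*r^3 - 9*r^4 + 6*r^5 + r^6 + 3*r^8 with hPdef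
  set Q : ℝ := r^2*(1+r^2)*(r^4+2*r-3) with hQdef
  -- the main algebraic reduction using s² = 1 + 4r²
  have hD : 2 * ((1 + r ^ 3) ^ 2 * (c ^ 3 + 1) - c ^ 6) = P + Q * s := by
    rw [hc, hPdef, hQdef]
    linear_combination ((-7/32) + (-9/16)*s + (-1/2)*s^2 + (-3/16)*s^3 + (-1/32)*s^4
      + (-17/8)*r^2 + (-3/4)*r^2*s + (-1/8)*r^2*s^2 + (3/2)*r^3 + (1/2)*r^3*s
      + (-1/2)*r^4 + (3/4)*r^6 + (1/4)*r^6*s) * hs2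
  have hP : 0 ≤ P := by
    rw [hPdef]
    nlinarith [sq_nonneg r, sq_nonneg (1-r), sq_nonneg (r - r^2), sq_nonneg (r^2 - r^3),
      mul_nonneg hr0 (sq_nonneg (1-r)), pow_nonneg hr0 3, pow_nonneg hr0 4,
      mul_nonneg (pow_nonneg hr0 4) (sq_nonneg (1-r)),
      mul_nonneg (pow_nonneg hr0 6) (sq_nonneg (1-r))]
  have hQs : 0 ≤ -(Q * s) := by
    have h1 : Q ≤ 0 := by
      rw [hQdef]
      have h2 : r^4 + 2*r - 3 ≤ 0 := by nlinarith [pow_le_one₀ hr0 hr1 (n := 4)]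
      have h3 : (0:ℝ) ≤ r^2*(1+r^2) := by positivity
      nlinarith
    nlinarith [mul_nonneg (neg_nonneg.mpr h1) hs0]
  have hq : 0 < 4 + 8*r + 16*r^3 + 4*r^4 + 16*r^6 - 8*r^7 - 4*r^10 := by
    nlinarith [pow_le_one₀ hr0 hr1 (n := 10), pow_le_one₀ hr0 hr1 (n := 7),
      pow_nonneg hr0 3, pow_nonneg hr0 4, pow_nonneg hr0 6,
      mul_le_of_le_one_right hr0 (pow_le_one₀ hr0 hr1 (n := 6))]
  have hE : P^2 - Q^2 * (1 + 4*r^2)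
      = (r^4 + r - 1)^2 * (4 + 8*r + 16*r^3 + 4*r^4 + 16*r^6 - 8*r^7 - 4*r^10) := by
    rw [hPdef, hQdef]; ring
  have hsq : (-(Q*s))^2 = Q^2 * (1 + 4*r^2) := by
    have : (-(Q*s))^2 = Q^2 * s^2 := by ring
    rw [this, hs2]
  -- main inequality
  have hineq : 0 ≤ P + Q * s := by
    have h2 : (-(Q*s))^2 ≤ P^2 := by
      rw [hsq]
      nlinarith [sq_nonneg (r^4 + r - 1), hq, hE]
    have := le_of_pow_le_pow_left₀ (n := 2) two_ne_zero hP h2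
    linarith
  constructor
  · linarith [hD, hineq]
  · constructor
    · intro h
      have h0 : P + Q * s = 0 := by rw [← hD, h]; ring
      have hPQ : P = -(Q*s) := by linarith
      have hEzero : (r^4 + r - 1)^2 * (4 + 8*r + 16*r^3 + 4*r^4 + 16*r^6 - 8*r^7 - 4*r^10) = 0 := by
        rw [← hE, ← hsq, ← hPQ]; ring
      have : (r^4 + r - 1)^2 = 0 := by
        rcases mul_eq_zero.mp hEzero with h' | h'
        · exact h'
        · linarith
      have := pow_eq_zero_iff (n := 2) two_ne_zero |>.mp this
      linarith
    · intro h
      have hEzero : P^2 = (-(Q*s))^2 := by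
        rw [hsq]
        linear_combination hE + ((r^4 + r - 1) *
          (4 + 8*r + 16*r^3 + 4*r^4 + 16*r^6 - 8*r^7 - 4*r^10)) * h
      have h1 : P = -(Q*s) := by
        have := le_of_pow_le_pow_left₀ (n := 2) two_ne_zero hP (le_of_eq hEzero.symm)
        have := le_of_pow_le_pow_left₀ (n := 2) two_ne_zero hQs (le_of_eq hEzero)
        linarith
      have h0 : P + Q * s = 0 := by rw [h1]; ring
      linarith [hD, h0]
end

section
/- The entropies h^{(k)} of the golden mean k-tree shifts converge to log 2 as k → ∞. -/
open Filter

lemma Bp_one_le (k : ℕ) : ∀ n, 1 ≤ (Bp k n).1 ∧ 1 ≤ (Bp k n).2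
  | 0 => ⟨le_refl 1, le_refl 1⟩
  | n + 1 => by
    obtain ⟨h1, h2⟩ := Bp_one_le k n
    refine ⟨one_le_pow₀ (by linarith), one_le_pow₀ h1⟩

lemma Bt_two_le (k n : ℕ) : 2 ≤ Bt k n := by
  obtain ⟨h1, h2⟩ := Bp_one_le k n
  unfold Bt; linarith

lemma log_Bt_step (k n : ℕ) (hk : 2 ≤ k) :
    (k : ℝ) * Real.log (Bt k n) ≤ Real.log (Bt k (n + 1)) ∧
    Real.log (Bt k (n + 1)) ≤ (k : ℝ) * Real.log (Bt k n) + Real.log 2 := by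
  obtain ⟨h1, h2⟩ := Bp_one_le k n
  have hBt : 2 ≤ Bt k n := Bt_two_le k n
  have hpos : (0 : ℝ) < Bt k n := by linarith
  have heq : Bt k (n + 1) = (Bt k n) ^ k + (Bp k n).1 ^ k := by
    simp [Bt, Bp]
  have hle1 : (Bp k n).1 ≤ Bt k n := by unfold Bt; linarith
  have hp1 : (0 : ℝ) < (Bp k n).1 := by linarith
  have hpowpos : (0 : ℝ) < (Bt k n) ^ k := pow_pos hpos k
  have hlow : (Bt k n) ^ k ≤ Bt k (n + 1) := by
    rw [heq]
    have : (0 : ℝ) ≤ (Bp k n).1 ^ k := le_of_lt (pow_pos hp1 k)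
    linarith
  have hhigh : Bt k (n + 1) ≤ 2 * (Bt k n) ^ k := by
    rw [heq]
    have : (Bp k n).1 ^ k ≤ (Bt k n) ^ k :=
      pow_le_pow_left₀ (le_of_lt hp1) hle1 k
    linarith
  constructor
  · have := Real.log_le_log hpowpos hlow
    rwa [Real.log_pow] at this
  · have := Real.log_le_log (lt_of_lt_of_le hpowpos hlow) hhigh
    rw [Real.log_mul (by norm_num) (ne_of_gt hpowpos), Real.log_pow] at this
    linarith

lemma log_Bt_low (k : ℕ) (hk : 2 ≤ k) :
    ∀ n, (k : ℝ) ^ n * Real.log 2 ≤ Real.log (Bt k n)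
  | 0 => by
    norm_num [Bt, Bp]
  | n + 1 => by
    have IH := log_Bt_low k hk n
    have hstep := (log_Bt_step k n hk).1
    have hknn : (0 : ℝ) ≤ (k : ℝ) := by positivity
    calc (k : ℝ) ^ (n + 1) * Real.log 2 = (k : ℝ) * ((k : ℝ) ^ n * Real.log 2) := by ring
    _ ≤ (k : ℝ) * Real.log (Bt k n) := by
        exact mul_le_mul_of_nonneg_left IH hknn
    _ ≤ Real.log (Bt k (n + 1)) := hstep

lemma log_Bt_high (k : ℕ) (hk : 2 ≤ k) :
    ∀ n, ((k : ℝ) - 1) * Real.log (Bt k n) ≤ ((k : ℝ) ^ (n + 1) - 1) * Real.log 2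
  | 0 => by
    norm_num [Bt, Bp]
  | n + 1 => by
    have IH := log_Bt_high k hk n
    have hstep := (log_Bt_step k n hk).2
    have hk2 : (2 : ℝ) ≤ (k : ℝ) := by exact_mod_cast hk
    have h1 : ((k : ℝ) - 1) * Real.log (Bt k (n + 1)) ≤
        ((k : ℝ) - 1) * ((k : ℝ) * Real.log (Bt k n) + Real.log 2) :=
      mul_le_mul_of_nonneg_left hstep (by linarith)
    have h2 : (k : ℝ) * (((k : ℝ) - 1) * Real.log (Bt k n)) ≤
        (k : ℝ) * (((k : ℝ) ^ (n + 1) - 1) * Real.log 2) :=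
      mul_le_mul_of_nonneg_left IH (by linarith)
    have e1 : ((k : ℝ) - 1) * ((k : ℝ) * Real.log (Bt k n) + Real.log 2) =
        (k : ℝ) * (((k : ℝ) - 1) * Real.log (Bt k n)) + ((k : ℝ) - 1) * Real.log 2 := by
      ring
    have e2 : (k : ℝ) * (((k : ℝ) ^ (n + 1) - 1) * Real.log 2) + ((k : ℝ) - 1) * Real.log 2 =
        ((k : ℝ) ^ (n + 1 + 1) - 1) * Real.log 2 := by
      ring
    linarith

lemma h_bounds (k : ℕ) (hk : 2 ≤ k) (hv : ℝ)
    (ht : Tendsto (fun n : ℕ => ((k : ℝ) - 1) * Real.log (Bt k n) / ((k : ℝ) ^ (n + 1) - 1))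
        atTop (nhds hv)) :
    (1 - 1 / (k : ℝ)) * Real.log 2 ≤ hv ∧ hv ≤ Real.log 2 := by
  have hk2 : (2 : ℝ) ≤ (k : ℝ) := by exact_mod_cast hk
  have hlog2 : (0 : ℝ) < Real.log 2 := Real.log_pos (by norm_num)
  have hden : ∀ n : ℕ, (0 : ℝ) < (k : ℝ) ^ (n + 1) - 1 := by
    intro n
    have : (2 : ℝ) ^ (n + 1) ≤ (k : ℝ) ^ (n + 1) :=
      pow_le_pow_left₀ (by norm_num) hk2 (n + 1)
    have : (2 : ℝ) ≤ (2 : ℝ) ^ (n + 1) := by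
      calc (2 : ℝ) = 2 ^ 1 := by norm_num
      _ ≤ 2 ^ (n + 1) := pow_le_pow_right₀ (by norm_num) (by omega)
    linarith
  constructor
  · refine ge_of_tendsto ht (Eventually.of_forall fun n => ?_)
    rw [le_div_iff₀ (hden n)]
    have hlow := log_Bt_low k hk n
    have hX : ((k : ℝ) - 1) * ((k : ℝ) ^ n * Real.log 2) ≤
        ((k : ℝ) - 1) * Real.log (Bt k n) :=
      mul_le_mul_of_nonneg_left hlow (by linarith)
    have hkne : (k : ℝ) ≠ 0 := by linarith
    have key : (1 - 1 / (k : ℝ)) * Real.log 2 * ((k : ℝ) ^ (n + 1) - 1) ≤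
        ((k : ℝ) - 1) * ((k : ℝ) ^ n * Real.log 2) := by
      have e1 : (1 - 1 / (k : ℝ)) = ((k : ℝ) - 1) / (k : ℝ) := by
        field_simp
      rw [e1, div_mul_eq_mul_div, div_mul_eq_mul_div, div_le_iff₀ (by linarith : (0:ℝ) < (k:ℝ))]
      have hpow : (k : ℝ) ^ (n + 1) = (k : ℝ) ^ n * (k : ℝ) := by ring
      rw [hpow]
      nlinarith [mul_nonneg (by linarith : (0:ℝ) ≤ (k:ℝ) - 1) hlog2.le]
    linarith
  · refine le_of_tendsto ht (Eventually.of_forall fun n => ?_)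
    rw [div_le_iff₀ (hden n)]
    have := log_Bt_high k hk n
    linarith

/-- The entropies `h^{(k)}` of the golden mean `k`-tree shifts converge to `log 2`
as `k → ∞`. -/
theorem golden_mean_tree_entropy_tendsto_log_two (h : ℕ → ℝ)
    (hh : ∀ k : ℕ, 2 ≤ k →
      Tendsto (fun n : ℕ => ((k : ℝ) - 1) * Real.log (Bt k n) / ((k : ℝ) ^ (n + 1) - 1))
        atTop (nhds (h k))) :
    Tendsto h atTop (nhds (Real.log 2)) := by
  have hlow : ∀ᶠ k : ℕ in atTop, (1 - 1 / (k : ℝ)) * Real.log 2 ≤ h k := by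
    filter_upwards [eventually_ge_atTop 2] with k hk
    exact (h_bounds k hk (h k) (hh k hk)).1
  have hhigh : ∀ᶠ k : ℕ in atTop, h k ≤ Real.log 2 := by
    filter_upwards [eventually_ge_atTop 2] with k hk
    exact (h_bounds k hk (h k) (hh k hk)).2
  have hg : Tendsto (fun k : ℕ => (1 - 1 / (k : ℝ)) * Real.log 2) atTop
      (nhds (Real.log 2)) := by
    have h1 : Tendsto (fun k : ℕ => 1 / (k : ℝ)) atTop (nhds 0) :=
      tendsto_one_div_atTop_nhds_zero_nat
    have h2 : Tendsto (fun k : ℕ => (1 : ℝ) - 1 / (k : ℝ)) atTop (nhds 1) := by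
      simpa using tendsto_const_nhds.sub h1
    simpa using h2.mul_const (Real.log 2)
  exact tendsto_of_tendsto_of_tendsto_of_le_of_le' hg tendsto_const_nhds hlow hhigh
end

section
/- For each integer k with 2 ≤ k ≤ 4, the map T_k(x) = 1/(1+x^k) on [0,1] has a unique fixed point u_k, the iterates T_k^n(x) converge to u_k for every x ∈ [0,1], and u_k is the only periodic point of T_k in [0,1]. -/
open Filter

/-- The map `T_k(x) = 1/(1+x^k)` advancing the ratio of symbol counts. -/
noncomputable def Tmap (k : ℕ) (x : ℝ) : ℝ := 1 / (1 + x ^ k)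

lemma one_add_pow_pos (k : ℕ) {x : ℝ} (hx : 0 ≤ x) : 0 < 1 + x ^ k := by
  have := pow_nonneg hx k; linarith

lemma Tmap_mem (k : ℕ) {x : ℝ} (hx : x ∈ Set.Icc (0 : ℝ) 1) :
    Tmap k x ∈ Set.Icc (0 : ℝ) 1 := by
  have h0 := one_add_pow_pos k hx.1
  have h1 : (1 : ℝ) ≤ 1 + x ^ k := by have := pow_nonneg hx.1 k; linarith
  constructor
  · rw [Tmap]; positivity
  · rw [Tmap, div_le_one h0]; linarith

lemma Tmap_anti (k : ℕ) {x y : ℝ} (hx : 0 ≤ x) (hxy : x ≤ y) :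
    Tmap k y ≤ Tmap k x := by
  have h0 := one_add_pow_pos k hx
  have hp : x ^ k ≤ y ^ k := pow_le_pow_left₀ hx hxy k
  exact one_div_le_one_div_of_le h0 (by linarith)

lemma Tmap_contOn (k : ℕ) : ContinuousOn (Tmap k) (Set.Icc (0 : ℝ) 1) := by
  apply ContinuousOn.div continuousOn_const
  · exact continuousOn_const.add (continuousOn_pow k)
  · intro x hx; exact ne_of_gt (one_add_pow_pos k hx.1)

lemma Tmap_fixed_unique (k : ℕ) {v w : ℝ} (hv : 0 ≤ v) (hw : 0 ≤ w)
    (hfv : Tmap k v = v) (hfw : Tmap k w = w) : v = w := by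
  have hv0 := one_add_pow_pos k hv
  have hw0 := one_add_pow_pos k hw
  have h1 : v * (1 + v ^ k) = 1 := by
    rw [Tmap, div_eq_iff (ne_of_gt hv0)] at hfv; linarith [hfv]
  have h2 : w * (1 + w ^ k) = 1 := by
    rw [Tmap, div_eq_iff (ne_of_gt hw0)] at hfw; linarith [hfw]
  by_contra hne
  rcases lt_or_gt_of_ne hne with h | h
  · have hp : v ^ k ≤ w ^ k := pow_le_pow_left₀ hv h.le k
    nlinarith
  · have hp : w ^ k ≤ v ^ k := pow_le_pow_left₀ hw h.le k
    nlinarith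

lemma Tmap_exists_fixed (k : ℕ) (hk : 2 ≤ k) :
    ∃ u ∈ Set.Icc (0 : ℝ) 1, Tmap k u = u := by
  have hcont : ContinuousOn (fun x => Tmap k x - x) (Set.Icc (0 : ℝ) 1) :=
    (Tmap_contOn k).sub continuousOn_id
  have key := intermediate_value_Icc' (by norm_num : (0:ℝ) ≤ 1) hcont
  have h0 : (0 : ℝ) ∈ Set.Icc (Tmap k 1 - 1) (Tmap k 0 - 0) := by
    have e1 : Tmap k 1 = 1 / 2 := by simp [Tmap]; norm_num
    have e0 : Tmap k 0 = 1 := by simp [Tmap, zero_pow (by omega : k ≠ 0)]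
    rw [e1, e0]; norm_num
  obtain ⟨u, hu, hfu⟩ := key h0
  exact ⟨u, hu, by linarith [sub_eq_zero.mp hfu]⟩

/-- Key lemma: for `2 ≤ k ≤ 4`, any fixed point of `T_k ∘ T_k` in `[0,1]` is a
fixed point of `T_k` (no 2-cycles below the critical value). -/
lemma Tmap_sq_fixed (k : ℕ) (hk2 : 2 ≤ k) (hk4 : k ≤ 4) {x : ℝ}
    (hx : x ∈ Set.Icc (0 : ℝ) 1) (h : Tmap k (Tmap k x) = x) : Tmap k x = x := by
  obtain ⟨hx0, hx1⟩ := hx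
  have h1x : (0:ℝ) ≤ 1 - x := by linarith
  interval_cases k
  -- k = 2
  · simp only [Tmap] at h ⊢
    rw [div_eq_iff (by positivity), one_div, inv_pow] at h
    field_simp at h
    have hq : (x^3 + x - 1) * (x^2 - x + 1) = 0 := by linear_combination -h
    have hR : (0:ℝ) < x^2 - x + 1 := by nlinarith
    have hq0 : x^3 + x - 1 = 0 := by
      rcases mul_eq_zero.mp hq with h' | h'
      · exact h'
      · linarith
    rw [div_eq_iff (by positivity)]
    linear_combination -hq0
  -- k = 3
  · simp only [Tmap] at h ⊢
    rw [div_eq_iff (by positivity), one_div, inv_pow] at h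
    field_simp at h
    have hq : (x^4 + x - 1) * (x^6 - x^5 + 2*x^3 - x^2 - x + 1) = 0 := by
      linear_combination -h
    have hR : (0:ℝ) < x^6 - x^5 + 2*x^3 - x^2 - x + 1 := by
      nlinarith [mul_nonneg (pow_nonneg hx0 0) (pow_nonneg h1x 6), mul_nonneg (pow_nonneg hx0 1) (pow_nonneg h1x 5), mul_nonneg (pow_nonneg hx0 2) (pow_nonneg h1x 4), mul_nonneg (pow_nonneg hx0 3) (pow_nonneg h1x 3), mul_nonneg (pow_nonneg hx0 4) (pow_nonneg h1x 2), mul_nonneg (pow_nonneg hx0 5) (pow_nonneg h1x 1), mul_nonneg (pow_nonneg hx0 6) (pow_nonneg h1x 0)]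
    have hq0 : x^4 + x - 1 = 0 := by
      rcases mul_eq_zero.mp hq with h' | h'
      · exact h'
      · linarith
    rw [div_eq_iff (by positivity)]
    linear_combination -hq0
  -- k = 4
  · simp only [Tmap] at h ⊢
    rw [div_eq_iff (by positivity), one_div, inv_pow] at h
    field_simp at h
    have hq : (x^5 + x - 1) * (x^12 - x^11 + 3*x^8 - 2*x^7 - x^6 + 3*x^4 - x^3 - x^2 - x + 1) = 0 := by
      linear_combination -h
    have hR : (0:ℝ) < x^12 - x^11 + 3*x^8 - 2*x^7 - x^6 + 3*x^4 - x^3 - x^2 - x + 1 := by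
      linarith [mul_nonneg (pow_nonneg hx0 0) (pow_nonneg h1x 23), mul_nonneg (pow_nonneg hx0 1) (pow_nonneg h1x 22), mul_nonneg (pow_nonneg hx0 2) (pow_nonneg h1x 21), mul_nonneg (pow_nonneg hx0 3) (pow_nonneg h1x 20), mul_nonneg (pow_nonneg hx0 4) (pow_nonneg h1x 19), mul_nonneg (pow_nonneg hx0 5) (pow_nonneg h1x 18), mul_nonneg (pow_nonneg hx0 6) (pow_nonneg h1x 17), mul_nonneg (pow_nonneg hx0 7) (pow_nonneg h1x 16), mul_nonneg (pow_nonneg hx0 8) (pow_nonneg h1x 15), mul_nonneg (pow_nonneg hx0 9) (pow_nonneg h1x 14), mul_nonneg (pow_nonneg hx0 10) (pow_nonneg h1x 13), mul_nonneg (pow_nonneg hx0 11) (pow_nonneg h1x 12), mul_nonneg (pow_nonneg hx0 12) (pow_nonneg h1x 11), mul_nonneg (pow_nonneg hx0 13) (pow_nonneg h1x 10), mul_nonneg (pow_nonneg hx0 14) (pow_nonneg h1x 9), mul_nonneg (pow_nonneg hx0 15) (pow_nonneg h1x 8), mul_nonneg (pow_nonneg hx0 16) (pow_nonneg h1x 7),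 mul_nonneg (pow_nonneg hx0 17) (pow_nonneg h1x 6), mul_nonneg (pow_nonneg hx0 18) (pow_nonneg h1x 5), mul_nonneg (pow_nonneg hx0 19) (pow_nonneg h1x 4), mul_nonneg (pow_nonneg hx0 20) (pow_nonneg h1x 3), mul_nonneg (pow_nonneg hx0 21) (pow_nonneg h1x 2), mul_nonneg (pow_nonneg hx0 22) (pow_nonneg h1x 1), mul_nonneg (pow_nonneg hx0 23) (pow_nonneg h1x 0)]
    have hq0 : x^5 + x - 1 = 0 := by
      rcases mul_eq_zero.mp hq with h' | h'
      · exact h'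
      · linarith
    rw [div_eq_iff (by positivity)]
    linear_combination -hq0

lemma limit_fixed {S : ℝ → ℝ} (hcont : ContinuousOn S (Set.Icc (0:ℝ) 1))
    {a : ℕ → ℝ} (hmem : ∀ n, a n ∈ Set.Icc (0:ℝ) 1)
    (hstep : ∀ n, a (n + 1) = S (a n)) {L : ℝ}
    (hlim : Tendsto a atTop (nhds L)) : L ∈ Set.Icc (0:ℝ) 1 ∧ S L = L := by
  have hL : L ∈ Set.Icc (0:ℝ) 1 :=
    isClosed_Icc.mem_of_tendsto hlim (Filter.Eventually.of_forall hmem)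
  refine ⟨hL, ?_⟩
  have hw : Tendsto a atTop (nhdsWithin L (Set.Icc (0:ℝ) 1)) :=
    tendsto_nhdsWithin_of_tendsto_nhds_of_eventually_within a hlim
      (Filter.Eventually.of_forall hmem)
  have h1 : Tendsto (fun n => S (a n)) atTop (nhds (S L)) :=
    (hcont L hL).tendsto.comp hw
  have h2 : Tendsto (fun n => a (n + 1)) atTop (nhds L) :=
    hlim.comp (tendsto_add_atTop_nat 1)
  have h3 : Tendsto (fun n => S (a n)) atTop (nhds L) := by
    simpa [hstep] using h2
  exact tendsto_nhds_unique h1 h3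

/-- Monotone-map convergence on `[0,1]` with a unique fixed point. -/
lemma iter_tendsto_of_monotoneOn {S : ℝ → ℝ}
    (hmap : ∀ x ∈ Set.Icc (0:ℝ) 1, S x ∈ Set.Icc (0:ℝ) 1)
    (hmono : ∀ x ∈ Set.Icc (0:ℝ) 1, ∀ y ∈ Set.Icc (0:ℝ) 1, x ≤ y → S x ≤ S y)
    (hcont : ContinuousOn S (Set.Icc (0:ℝ) 1))
    {u : ℝ} (hfix : ∀ v ∈ Set.Icc (0:ℝ) 1, S v = v → v = u)
    {x : ℝ} (hx : x ∈ Set.Icc (0:ℝ) 1) :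
    Tendsto (fun n : ℕ => S^[n] x) atTop (nhds u) := by
  set a : ℕ → ℝ := fun n => S^[n] x with ha
  have hmem : ∀ n, a n ∈ Set.Icc (0:ℝ) 1 := by
    intro n
    induction n with
    | zero => simpa [ha] using hx
    | succ n ih => simpa [ha, Function.iterate_succ_apply'] using hmap _ ih
  have hstep : ∀ n, a (n + 1) = S (a n) := fun n => Function.iterate_succ_apply' S n x
  rcases le_total x (S x) with hc | hc
  · have hmonoa : Monotone a := by
      apply monotone_nat_of_le_succ
      intro n
      induction n with
      | zero => simpa [ha, hstep] using hc
      | succ n ih =>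
        calc a (n + 1) = S (a n) := hstep n
          _ ≤ S (a (n + 1)) := hmono _ (hmem n) _ (hmem (n + 1)) ih
          _ = a (n + 2) := (hstep (n + 1)).symm
    have hbdd : BddAbove (Set.range a) := ⟨1, by rintro _ ⟨n, rfl⟩; exact (hmem n).2⟩
    have hlim : Tendsto a atTop (nhds (⨆ n, a n)) := tendsto_atTop_ciSup hmonoa hbdd
    obtain ⟨hL, hfixL⟩ := limit_fixed hcont hmem hstep hlim
    rwa [hfix _ hL hfixL] at hlim
  · have hantia : Antitone a := by
      apply antitone_nat_of_succ_le
      intro n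
      induction n with
      | zero => simpa [ha, hstep] using hc
      | succ n ih =>
        calc a (n + 2) = S (a (n + 1)) := hstep (n + 1)
          _ ≤ S (a n) := hmono _ (hmem (n + 1)) _ (hmem n) ih
          _ = a (n + 1) := (hstep n).symm
    have hbdd : BddBelow (Set.range a) := ⟨0, by rintro _ ⟨n, rfl⟩; exact (hmem n).1⟩
    have hlim : Tendsto a atTop (nhds (⨅ n, a n)) := tendsto_atTop_ciInf hantia hbdd
    obtain ⟨hL, hfixL⟩ := limit_fixed hcont hmem hstep hlim
    rwa [hfix _ hL hfixL] at hlim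

/-- For `2 ≤ k ≤ 4`, the map `T_k(x) = 1/(1+x^k)` on `[0,1]` has a unique fixed point
`u_k`, the iterates of every point of `[0,1]` converge to `u_k`, and `u_k` is the only
periodic point of `T_k` in `[0,1]`. -/
theorem Tmap_attracting_fixed_point (k : ℕ) (hk2 : 2 ≤ k) (hk4 : k ≤ 4) :
    ∃ u : ℝ, u ∈ Set.Icc (0 : ℝ) 1 ∧ Tmap k u = u ∧
      (∀ v ∈ Set.Icc (0 : ℝ) 1, Tmap k v = v → v = u) ∧
      (∀ x ∈ Set.Icc (0 : ℝ) 1, Tendsto (fun n : ℕ => (Tmap k)^[n] x) atTop (nhds u)) ∧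
      (∀ x ∈ Set.Icc (0 : ℝ) 1, ∀ m : ℕ, 1 ≤ m → (Tmap k)^[m] x = x → x = u) := by
  obtain ⟨u, hu, hfu⟩ := Tmap_exists_fixed k hk2
  -- the doubled map
  set S : ℝ → ℝ := fun y => Tmap k (Tmap k y) with hS
  have hmap : ∀ y ∈ Set.Icc (0:ℝ) 1, S y ∈ Set.Icc (0:ℝ) 1 :=
    fun y hy => Tmap_mem k (Tmap_mem k hy)
  have hmono : ∀ a ∈ Set.Icc (0:ℝ) 1, ∀ b ∈ Set.Icc (0:ℝ) 1, a ≤ b → S a ≤ S b := by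
    intro a ha b hb hab
    exact Tmap_anti k (Tmap_mem k hb).1 (Tmap_anti k ha.1 hab)
  have hcontS : ContinuousOn S (Set.Icc (0:ℝ) 1) :=
    (Tmap_contOn k).comp (Tmap_contOn k) (fun y hy => Tmap_mem k hy)
  have hfixS : ∀ v ∈ Set.Icc (0:ℝ) 1, S v = v → v = u := by
    intro v hv hfv
    exact Tmap_fixed_unique k hv.1 hu.1 (Tmap_sq_fixed k hk2 hk4 hv hfv) hfu
  have hSconv : ∀ x ∈ Set.Icc (0:ℝ) 1,
      Tendsto (fun n : ℕ => S^[n] x) atTop (nhds u) :=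
    fun x hx => iter_tendsto_of_monotoneOn hmap hmono hcontS hfixS hx
  have hSpow : ∀ (x : ℝ) (n : ℕ), S^[n] x = (Tmap k)^[2 * n] x := by
    intro x n
    have h2 : (Tmap k)^[2] = S := by
      funext y
      rw [hS]
      show (Tmap k)^[2] y = Tmap k (Tmap k y)
      rw [Function.iterate_succ_apply', Function.iterate_one]
    rw [Function.iterate_mul, h2]
  have hconv : ∀ x ∈ Set.Icc (0:ℝ) 1,
      Tendsto (fun n : ℕ => (Tmap k)^[n] x) atTop (nhds u) := by
    intro x hx
    have heven : Tendsto (fun n : ℕ => (Tmap k)^[2 * n] x) atTop (nhds u) := by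
      have := hSconv x hx
      simpa [hSpow] using this
    have hodd : Tendsto (fun n : ℕ => (Tmap k)^[2 * n + 1] x) atTop (nhds u) := by
      have h1 : ∀ n : ℕ, (Tmap k)^[2 * n + 1] x = S^[n] (Tmap k x) := by
        intro n
        rw [Function.iterate_add_apply, Function.iterate_one, hSpow]
      have := hSconv (Tmap k x) (Tmap_mem k hx)
      simpa [h1] using this
    rw [Metric.tendsto_atTop] at heven hodd ⊢
    intro ε hε
    obtain ⟨N1, hN1⟩ := heven ε hε
    obtain ⟨N2, hN2⟩ := hodd ε hε
    refine ⟨2 * N1 + 2 * N2 + 2, fun n hn => ?_⟩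
    rcases Nat.even_or_odd n with ⟨m, hm⟩ | ⟨m, hm⟩
    · have hmn : n = 2 * m := by omega
      have : N1 ≤ m := by omega
      have := hN1 m this
      rwa [hmn]
    · have hmn : n = 2 * m + 1 := by omega
      have : N2 ≤ m := by omega
      have := hN2 m this
      rwa [hmn]
  refine ⟨u, hu, hfu, ?_, hconv, ?_⟩
  · intro v hv hfv
    exact Tmap_fixed_unique k hv.1 hu.1 hfv hfu
  · intro x hx m hm hper
    have hsub : Tendsto (fun n : ℕ => (Tmap k)^[m * n] x) atTop (nhds u) := by
      apply (hconv x hx).comp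
      apply tendsto_atTop_mono (fun n => Nat.le_mul_of_pos_left n (by omega : 0 < m))
      exact tendsto_id
    have hconst : ∀ n : ℕ, (Tmap k)^[m * n] x = x := by
      intro n
      rw [Function.iterate_mul]
      exact Function.iterate_fixed hper n
    rw [tendsto_congr hconst] at hsub
    exact tendsto_nhds_unique tendsto_const_nhds hsub
end

section
/- For each integer k ≥ 5, the map T_k(x) = 1/(1+x^k) on [0,1] has a unique fixed point u_k, and there exist points p_1, p_2 with 0 < p_1 < u_k < p_2 < 1 forming a 2-cycle (T_k(p_1) = p_2 and T_k(p_2) = p_1) such that for every x ∈ [0,1] with x ≠ u_k the even iterates T_k^{2n}(x) converge to p_1 or to p_2; moreover u_k, p_1, p_2 are the only periodic points of T_k in [0,1]. -/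
set_option maxHeartbeats 1000000


open Filter

namespace TwoCycleAux

open Set Filter



noncomputable def S (j : ℕ) (x : ℝ) : ℝ := Tmap (j+5) (Tmap (j+5) x)

noncomputable def Sd (j : ℕ) (x : ℝ) : ℝ :=
  ((j:ℝ)+5)^2 * (x*(1+x^(j+5)))^(j+4) / ((1+x^(j+5))^(j+5)+1)^2

noncomputable def F₁ (j : ℕ) (x : ℝ) : ℝ := (1+x^(j+5))^(j+6) / x^(j+4)
noncomputable def F₂ (j : ℕ) (x : ℝ) : ℝ := 1 / (x*(1+x^(j+5)))^(j+4)

noncomputable def Dq (j : ℕ) (x : ℝ) : ℝ :=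
  ((j:ℝ)+6)*((j:ℝ)+5)*x^(j+5) - ((j:ℝ)+4)*(1+x^(j+5))

noncomputable def F₁d (j : ℕ) (x : ℝ) : ℝ := (1+x^(j+5))^(j+5) * Dq j x / x^(j+5)

noncomputable def F₁dd (j : ℕ) (x : ℝ) : ℝ :=
  (1+x^(j+5))^(j+4) *
    ( ((j:ℝ)+5)^2*x^(j+5)*Dq j x + ((j:ℝ)+5)*(((j:ℝ)+5)^2+1)*(1+x^(j+5))*x^(j+5)
      - ((j:ℝ)+5)*(1+x^(j+5))*Dq j x ) / x^(j+6)

noncomputable def Gd (j : ℕ) (x : ℝ) : ℝ := 1 + ((j:ℝ)+6)*x^(j+5)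

noncomputable def F₂d (j : ℕ) (x : ℝ) : ℝ := -(((j:ℝ)+4) * Gd j x) / (x*(1+x^(j+5)))^(j+5)

noncomputable def F₂dd (j : ℕ) (x : ℝ) : ℝ :=
  ((j:ℝ)+4) * ( ((j:ℝ)+5)*(Gd j x)^2 - ((j:ℝ)+6)*((j:ℝ)+5)*x^(j+4)*(x*(1+x^(j+5))) )
    / (x*(1+x^(j+5)))^(j+6)

variable (j : ℕ)

lemma hasDerivAt_Q (x : ℝ) :
    HasDerivAt (fun y : ℝ => 1+y^(j+5)) (((j:ℝ)+5)*x^(j+4)) x := by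
  have h := (hasDerivAt_pow (j+5) x).const_add (1:ℝ)
  simp only [show j+5-1 = j+4 by omega] at h
  refine h.congr_deriv (Eq.symm ?_)
  push_cast
  ring

lemma one_add_pow_pos {x : ℝ} (hx : 0 ≤ x) : 0 < 1 + x^(j+5) := by
  have := pow_nonneg hx (j+5); linarith

lemma hasDerivAt_T {x : ℝ} (hx : 0 ≤ x) :
    HasDerivAt (Tmap (j+5)) (-(((j:ℝ)+5)*x^(j+4)) / (1+x^(j+5))^2) x := by
  have h := (hasDerivAt_const x (1:ℝ)).div (hasDerivAt_Q j x) (one_add_pow_pos j hx).ne'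
  refine h.congr_deriv (Eq.symm ?_)
  field_simp
  ring

lemma Tmap_pos {x : ℝ} (hx : 0 ≤ x) : 0 < Tmap (j+5) x :=
  div_pos one_pos (one_add_pow_pos j hx)

private lemma Sd_convert (K x w : ℝ) (hw : 0 < w) :
    K^2 * (x*w)^(j+4) / ((w^(j+5)+1)^2)
      = -(K*(1/w)^(j+4)) / (1+(1/w)^(j+5))^2 * (-(K*x^(j+4)) / w^2) := by
  have h1 : (1:ℝ)+(1/w)^(j+5) = (w^(j+5)+1)/w^(j+5) := by
    rw [div_pow, one_pow, add_div, div_self (pow_ne_zero _ hw.ne')]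
  have h2 : (w^(j+5)+1) ≠ 0 := by positivity
  rw [h1]
  simp only [one_div, inv_pow]
  field_simp
  ring

lemma hasDerivAt_S {x : ℝ} (hx : 0 ≤ x) : HasDerivAt (S j) (Sd j x) x := by
  have h1 := hasDerivAt_T j hx
  have h2 := hasDerivAt_T j (le_of_lt (Tmap_pos j hx))
  have h := h2.comp x h1
  have hS : S j = Tmap (j+5) ∘ Tmap (j+5) := rfl
  rw [hS]
  refine h.congr_deriv (Eq.symm ?_)
  have hT : Tmap (j+5) x = 1/(1+x^(j+5)) := rfl
  rw [Sd, hT]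
  exact Sd_convert j _ x _ (one_add_pow_pos j hx)

lemma hasDerivAt_F₁ {x : ℝ} (hx : 0 < x) : HasDerivAt (F₁ j) (F₁d j x) x := by
  have h := ((hasDerivAt_Q j x).pow (j+6)).div (hasDerivAt_pow (j+4) x)
    (pow_ne_zero _ hx.ne')
  simp only [show j+6-1 = j+5 by omega, show j+4-1 = j+3 by omega] at h
  simp only [Pi.pow_apply, Pi.mul_apply, Pi.neg_apply] at h
  refine h.congr_deriv (Eq.symm ?_)
  rw [F₁d, Dq]
  push_cast
  rw [div_eq_div_iff (by positivity) (by positivity)]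
  ring

lemma hasDerivAt_Dq (x : ℝ) :
    HasDerivAt (Dq j) ((((j:ℝ)+5)^2+1) * (((j:ℝ)+5)*x^(j+4))) x := by
  have h := (((hasDerivAt_pow (j+5) x).const_mul (((j:ℝ)+6)*((j:ℝ)+5))).sub
    ((hasDerivAt_Q j x).const_mul ((j:ℝ)+4)))
  simp only [show j+5-1 = j+4 by omega] at h
  refine h.congr_deriv (Eq.symm ?_)
  push_cast
  ring

lemma hasDerivAt_F₁d {x : ℝ} (hx : 0 < x) : HasDerivAt (F₁d j) (F₁dd j x) x := by
  have h := (((hasDerivAt_Q j x).pow (j+5)).mul (hasDerivAt_Dq j x)).div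
    (hasDerivAt_pow (j+5) x) (pow_ne_zero _ hx.ne')
  simp only [show j+5-1 = j+4 by omega] at h
  simp only [Pi.pow_apply, Pi.mul_apply, Pi.neg_apply] at h
  refine h.congr_deriv (Eq.symm ?_)
  rw [F₁dd, Dq]
  push_cast
  rw [div_eq_div_iff (by positivity) (by positivity)]
  ring

lemma base_pos {x : ℝ} (hx : 0 < x) : 0 < x*(1+x^(j+5)) :=
  mul_pos hx (one_add_pow_pos j hx.le)

lemma hasDerivAt_B (x : ℝ) :
    HasDerivAt (fun y : ℝ => y*(1+y^(j+5))) (Gd j x) x := by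
  have h := (hasDerivAt_id x).mul (hasDerivAt_Q j x)
  simp only [id_eq, one_mul] at h
  refine h.congr_deriv (Eq.symm ?_)
  rw [Gd]
  push_cast
  ring

lemma hasDerivAt_F₂ {x : ℝ} (hx : 0 < x) : HasDerivAt (F₂ j) (F₂d j x) x := by
  have hB := base_pos j hx
  have h := (hasDerivAt_const x (1:ℝ)).div ((hasDerivAt_B j x).pow (j+4))
    (pow_ne_zero _ hB.ne')
  simp only [show j+4-1 = j+3 by omega] at h
  simp only [Pi.pow_apply, Pi.mul_apply, Pi.neg_apply] at h
  refine h.congr_deriv (Eq.symm ?_)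
  rw [F₂d, Gd]
  push_cast
  rw [div_eq_div_iff (by positivity) (by positivity)]
  ring

lemma hasDerivAt_Gd (x : ℝ) :
    HasDerivAt (Gd j) (((j:ℝ)+6)*(((j:ℝ)+5)*x^(j+4))) x := by
  have h := ((hasDerivAt_pow (j+5) x).const_mul ((j:ℝ)+6)).const_add (1:ℝ)
  simp only [show j+5-1 = j+4 by omega] at h
  refine h.congr_deriv (Eq.symm ?_)
  push_cast
  ring

lemma hasDerivAt_F₂d {x : ℝ} (hx : 0 < x) : HasDerivAt (F₂d j) (F₂dd j x) x := by
  have hB := base_pos j hx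
  have h := (((hasDerivAt_Gd j x).const_mul ((j:ℝ)+4)).neg).div
    ((hasDerivAt_B j x).pow (j+5)) (pow_ne_zero _ hB.ne')
  simp only [show j+5-1 = j+4 by omega] at h
  simp only [Pi.pow_apply, Pi.mul_apply, Pi.neg_apply] at h
  refine h.congr_deriv (Eq.symm ?_)
  rw [F₂dd, Gd]
  push_cast
  rw [div_eq_div_iff (by positivity) (by positivity)]
  ring

lemma F₁_pos {x : ℝ} (hx : 0 < x) : 0 < F₁ j x :=
  div_pos (pow_pos (one_add_pow_pos j hx.le) _) (pow_pos hx _)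

lemma F₂_pos {x : ℝ} (hx : 0 < x) : 0 < F₂ j x :=
  div_pos one_pos (pow_pos (base_pos j hx) _)

lemma key1 {x : ℝ} (hx : 0 < x) : 0 < 2*F₁ j x*F₁dd j x - (F₁d j x)^2 := by
  have hw : (0:ℝ) < 1 + x^(j+5) := one_add_pow_pos j hx.le
  have ht : (0:ℝ) < x^(j+5) := pow_pos hx _
  have e : 2*F₁ j x*F₁dd j x - (F₁d j x)^2
      = (1+x^(j+5))^(2*j+10)/x^(2*j+10) *
        ( 2*((j:ℝ)+5)^2*x^(j+5)*Dq j x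
          + 2*((j:ℝ)+5)*(((j:ℝ)+5)^2+1)*(1+x^(j+5))*x^(j+5)
          - 2*((j:ℝ)+5)*(1+x^(j+5))*Dq j x - (Dq j x)^2 ) := by
    rw [F₁, F₁dd, F₁d]
    field_simp
    ring
  have e2 : 2*((j:ℝ)+5)^2*x^(j+5)*Dq j x
          + 2*((j:ℝ)+5)*(((j:ℝ)+5)^2+1)*(1+x^(j+5))*x^(j+5)
          - 2*((j:ℝ)+5)*(1+x^(j+5))*Dq j x - (Dq j x)^2
      = (((j:ℝ)+5)^2-1)*((((j:ℝ)+5)^2+1)*(x^(j+5))^2 + 2*x^(j+5) + 1) := by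
    rw [Dq]; ring
  rw [e, e2]
  have h1 : (0:ℝ) < ((j:ℝ)+5)^2-1 := by
    have : (0:ℝ) ≤ (j:ℝ) := Nat.cast_nonneg j
    nlinarith
  have h2 : (0:ℝ) < (((j:ℝ)+5)^2+1)*(x^(j+5))^2 + 2*x^(j+5) + 1 := by positivity
  positivity

lemma key2 {x : ℝ} (hx : 0 < x) : 0 < 2*F₂ j x*F₂dd j x - (F₂d j x)^2 := by
  have hB : (0:ℝ) < x*(1+x^(j+5)) := base_pos j hx
  have ht : (0:ℝ) < x^(j+5) := pow_pos hx _
  have e : 2*F₂ j x*F₂dd j x - (F₂d j x)^2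
      = (((j:ℝ)+4)*((j:ℝ)+6)) *
          ((((j:ℝ)+5)^2+1)*(x^(j+5))^2 + 2*x^(j+5) + 1) / (x*(1+x^(j+5)))^(2*j+10) := by
    rw [F₂, F₂dd, F₂d, Gd]
    field_simp
    ring
  rw [e]
  have h2 : (0:ℝ) < (((j:ℝ)+5)^2+1)*(x^(j+5))^2 + 2*x^(j+5) + 1 := by positivity
  have h3 : (0:ℝ) < (j:ℝ)+4 := by positivity
  have h4 : (0:ℝ) < (j:ℝ)+6 := by positivity
  positivity

noncomputable def vfun (j : ℕ) (x : ℝ) : ℝ := Real.sqrt (F₁ j x) + Real.sqrt (F₂ j x)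

noncomputable def v1 (j : ℕ) (x : ℝ) : ℝ :=
  F₁d j x / (2*Real.sqrt (F₁ j x)) + F₂d j x / (2*Real.sqrt (F₂ j x))

noncomputable def v2 (j : ℕ) (x : ℝ) : ℝ :=
  (2*F₁ j x*F₁dd j x - (F₁d j x)^2) / (4*F₁ j x*Real.sqrt (F₁ j x))
  + (2*F₂ j x*F₂dd j x - (F₂d j x)^2) / (4*F₂ j x*Real.sqrt (F₂ j x))

lemma sqrt_term_deriv {F Fd Fdd : ℝ → ℝ} {x : ℝ} (hF : 0 < F x)
    (h1 : HasDerivAt F (Fd x) x) (h2 : HasDerivAt Fd (Fdd x) x) :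
    HasDerivAt (fun y => Fd y/(2*Real.sqrt (F y)))
      ((2*F x*Fdd x - (Fd x)^2)/(4*F x*Real.sqrt (F x))) x := by
  have hs : 0 < Real.sqrt (F x) := Real.sqrt_pos.2 hF
  have h3 : HasDerivAt (fun y => 2*Real.sqrt (F y)) (2*(Fd x/(2*Real.sqrt (F x)))) x :=
    (h1.sqrt hF.ne').const_mul 2
  have h := h2.div h3 (by positivity)
  refine h.congr_deriv (Eq.symm ?_)
  have aux : ∀ A B C s : ℝ, 0 < s → s^2 = A →
      (2*A*C - B^2)/(4*A*s) = (C*(2*s) - B*(2*(B/(2*s))))/(2*s)^2 := by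
    intro A B C s hs hA
    subst hA
    field_simp
    ring
  exact aux (F x) (Fd x) (Fdd x) (Real.sqrt (F x)) hs (Real.sq_sqrt hF.le)

lemma hasDerivAt_v {x : ℝ} (hx : 0 < x) : HasDerivAt (vfun j) (v1 j x) x := by
  exact ((hasDerivAt_F₁ j hx).sqrt (F₁_pos j hx).ne').add
    ((hasDerivAt_F₂ j hx).sqrt (F₂_pos j hx).ne')

lemma hasDerivAt_v1 {x : ℝ} (hx : 0 < x) : HasDerivAt (v1 j) (v2 j x) x := by
  exact (sqrt_term_deriv (F₁_pos j hx) (hasDerivAt_F₁ j hx) (hasDerivAt_F₁d j hx)).add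
    (sqrt_term_deriv (F₂_pos j hx) (hasDerivAt_F₂ j hx) (hasDerivAt_F₂d j hx))

lemma v2_pos {x : ℝ} (hx : 0 < x) : 0 < v2 j x := by
  have h1 := key1 j hx
  have h2 := key2 j hx
  have h3 := F₁_pos j hx
  have h4 := F₂_pos j hx
  have h5 : 0 < Real.sqrt (F₁ j x) := Real.sqrt_pos.2 h3
  have h6 : 0 < Real.sqrt (F₂ j x) := Real.sqrt_pos.2 h4
  have := div_pos h1 (by positivity : (0:ℝ) < 4*F₁ j x*Real.sqrt (F₁ j x))
  have := div_pos h2 (by positivity : (0:ℝ) < 4*F₂ j x*Real.sqrt (F₂ j x))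
  rw [v2]; linarith

lemma strictConvexOn_v : StrictConvexOn ℝ (Ioo (0:ℝ) 1) (vfun j) := by
  apply StrictMonoOn.strictConvexOn_of_deriv (convex_Ioo _ _)
  · exact fun x hx => ((hasDerivAt_v j hx.1).continuousAt).continuousWithinAt
  · rw [interior_Ioo]
    have hmono : StrictMonoOn (v1 j) (Ioo (0:ℝ) 1) := by
      apply strictMonoOn_of_deriv_pos (convex_Ioo _ _)
      · exact fun x hx => ((hasDerivAt_v1 j hx.1).continuousAt).continuousWithinAt
      · rw [interior_Ioo]
        intro x hx
        rw [(hasDerivAt_v1 j hx.1).deriv]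
        exact v2_pos j hx.1
    intro a ha b hb hab
    rw [(hasDerivAt_v j ha.1).deriv, (hasDerivAt_v j hb.1).deriv]
    exact hmono ha hb hab

lemma vfun_sq {x : ℝ} (hx : 0 < x) :
    (vfun j x)^2 = ((1+x^(j+5))^(j+5)+1)^2 / (x*(1+x^(j+5)))^(j+4) := by
  have hw : (0:ℝ) < 1 + x^(j+5) := one_add_pow_pos j hx.le
  have hB : (0:ℝ) < x*(1+x^(j+5)) := base_pos j hx
  have hmul : F₁ j x * F₂ j x = ((1+x^(j+5))/x^(j+4))^2 := by
    rw [F₁, F₂, mul_pow]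
    field_simp
    ring
  have hsq : Real.sqrt (F₁ j x) * Real.sqrt (F₂ j x) = (1+x^(j+5))/x^(j+4) := by
    rw [← Real.sqrt_mul (F₁_pos j hx).le, hmul]
    exact Real.sqrt_sq (by positivity)
  rw [vfun, add_sq, Real.sq_sqrt (F₁_pos j hx).le, Real.sq_sqrt (F₂_pos j hx).le,
    mul_assoc, hsq]
  rw [F₁, F₂, mul_pow]
  field_simp
  ring

lemma vfun_sq_mul_Sd {x : ℝ} (hx : 0 < x) : (vfun j x)^2 * Sd j x = ((j:ℝ)+5)^2 := by
  have hw : (0:ℝ) < 1 + x^(j+5) := one_add_pow_pos j hx.le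
  have hB : (0:ℝ) < x*(1+x^(j+5)) := base_pos j hx
  have h1 : (0:ℝ) < (1+x^(j+5))^(j+5)+1 := by positivity
  rw [vfun_sq j hx, Sd]
  field_simp

lemma vfun_pos {x : ℝ} (hx : 0 < x) : 0 < vfun j x :=
  add_pos (Real.sqrt_pos.2 (F₁_pos j hx)) (Real.sqrt_pos.2 (F₂_pos j hx))

lemma vfun_eq_of_Sd_one {x : ℝ} (hx : 0 < x) (h : Sd j x = 1) : vfun j x = (j:ℝ)+5 := by
  have h1 := vfun_sq_mul_Sd j hx
  rw [h, mul_one] at h1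
  have h2 : (0:ℝ) ≤ (j:ℝ)+5 := by positivity
  calc vfun j x = Real.sqrt ((vfun j x)^2) := (Real.sqrt_sq (vfun_pos j hx).le).symm
    _ = Real.sqrt (((j:ℝ)+5)^2) := by rw [h1]
    _ = (j:ℝ)+5 := Real.sqrt_sq h2

lemma vfun_lt_of_Sd_gt_one {x : ℝ} (hx : 0 < x) (h : 1 < Sd j x) : vfun j x < (j:ℝ)+5 := by
  have h1 := vfun_sq_mul_Sd j hx
  have hv := vfun_pos j hx
  by_contra hcon
  push_neg at hcon
  have h2 : ((j:ℝ)+5)^2 ≤ (vfun j x)^2 := pow_le_pow_left₀ (by positivity) hcon 2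
  have h3 : (vfun j x)^2 * 1 < (vfun j x)^2 * Sd j x :=
    mul_lt_mul_of_pos_left h (pow_pos hv 2)
  rw [mul_one, h1] at h3
  linarith

/-! ### Basic properties of `Tmap` -/

lemma Tmap_le_one {x : ℝ} (hx : 0 ≤ x) : Tmap (j+5) x ≤ 1 := by
  rw [Tmap]
  have := pow_nonneg hx (j+5)
  rw [div_le_one (by linarith)]
  linarith

lemma Tmap_lt_one {x : ℝ} (hx : 0 < x) : Tmap (j+5) x < 1 := by
  rw [Tmap]
  have := pow_pos hx (j+5)
  rw [div_lt_one (by linarith)]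
  linarith

lemma Tmap_mem {x : ℝ} (hx : x ∈ Icc (0:ℝ) 1) : Tmap (j+5) x ∈ Icc (0:ℝ) 1 :=
  ⟨(Tmap_pos j hx.1).le, Tmap_le_one j hx.1⟩

lemma Tmap_anti {a b : ℝ} (ha : 0 ≤ a) (hab : a < b) :
    Tmap (j+5) b < Tmap (j+5) a := by
  rw [Tmap, Tmap]
  have h1 : a^(j+5) < b^(j+5) := pow_lt_pow_left₀ hab ha (by omega)
  have h2 := pow_nonneg ha (j+5)
  rw [div_lt_div_iff₀ (by linarith) (by linarith)]
  linarith

lemma S_mem {x : ℝ} (hx : x ∈ Icc (0:ℝ) 1) : S j x ∈ Icc (0:ℝ) 1 :=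
  Tmap_mem j (Tmap_mem j hx)

lemma S_mono {a b : ℝ} (ha : a ∈ Icc (0:ℝ) 1) (hab : a < b) (hb : b ≤ 1) :
    S j a < S j b := by
  have h1 : Tmap (j+5) b < Tmap (j+5) a := Tmap_anti j ha.1 hab
  exact Tmap_anti j (Tmap_pos j (ha.1.trans hab.le)).le h1

/-! ### The fixed point `u` -/

lemma exists_fixed : ∃ u ∈ Ioo (0:ℝ) 1, Tmap (j+5) u = u := by
  have hcont : ContinuousOn (fun x => Tmap (j+5) x - x) (Icc (0:ℝ) 1) := by
    intro x hx
    exact (((hasDerivAt_T j hx.1).continuousAt).sub continuousAt_id).continuousWithinAt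
  have h0 : (fun x => Tmap (j+5) x - x) 0 = 1 := by
    simp [Tmap, zero_pow (by omega : j+5 ≠ 0)]
  have h1 : (fun x => Tmap (j+5) x - x) 1 = -(1/2) := by
    norm_num [Tmap]
  have := intermediate_value_Ioo' (by norm_num : (0:ℝ) ≤ 1) hcont
  have hmem : (0:ℝ) ∈ Ioo ((fun x => Tmap (j+5) x - x) 1) ((fun x => Tmap (j+5) x - x) 0) := by
    rw [h0, h1]; norm_num
  obtain ⟨u, hu, hu2⟩ := this hmem
  have hu3 : Tmap (j+5) u - u = 0 := hu2
  exact ⟨u, hu, by linarith⟩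

/-! ### `u < 1 - 1/k` via the exponential bound -/

lemma pow_bound : (1 + 1/((j:ℝ)+4))^(j+6) < (j:ℝ)+5 := by
  have h4 : (0:ℝ) < (j:ℝ)+4 := by positivity
  have hr : (0:ℝ) ≤ 1/((j:ℝ)+4) := by positivity
  have h1 : (1 + 1/((j:ℝ)+4))^(j+6) ≤ Real.exp (1/((j:ℝ)+4))^(j+6) := by
    apply pow_le_pow_left₀ (by linarith)
    linarith [Real.add_one_le_exp (1/((j:ℝ)+4))]
  have h2 : Real.exp (1/((j:ℝ)+4))^(j+6) = Real.exp (((j:ℝ)+6)/((j:ℝ)+4)) := by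
    rw [← Real.exp_nat_mul]
    congr 1
    push_cast
    field_simp
  have h3 : ((j:ℝ)+6)/((j:ℝ)+4) ≤ 3/2 := by
    rw [div_le_iff₀ h4]
    have : (0:ℝ) ≤ (j:ℝ) := Nat.cast_nonneg j
    linarith
  have h5 : Real.exp ((3:ℝ)/2) < 5 := by
    have he := Real.exp_one_lt_d9
    have h6 : Real.exp ((3:ℝ)/2)^2 = Real.exp 3 := by
      rw [← Real.exp_nat_mul]; norm_num
    have h7 : Real.exp (3:ℝ) = Real.exp 1^3 := by
      rw [← Real.exp_nat_mul]; norm_num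
    have h8 : Real.exp 1^3 < 2.7182818286^3 :=
      pow_lt_pow_left₀ he (Real.exp_pos 1).le (by norm_num)
    have h9 : Real.exp ((3:ℝ)/2)^2 < 25 := by
      rw [h6, h7]; nlinarith
    nlinarith [Real.exp_pos ((3:ℝ)/2)]
  have h10 : Real.exp (((j:ℝ)+6)/((j:ℝ)+4)) ≤ Real.exp ((3:ℝ)/2) := Real.exp_le_exp.2 h3
  have h11 : (5:ℝ) ≤ (j:ℝ)+5 := by
    have : (0:ℝ) ≤ (j:ℝ) := Nat.cast_nonneg j
    linarith
  calc (1 + 1/((j:ℝ)+4))^(j+6) ≤ Real.exp (1/((j:ℝ)+4))^(j+6) := h1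
    _ = Real.exp (((j:ℝ)+6)/((j:ℝ)+4)) := h2
    _ ≤ Real.exp ((3:ℝ)/2) := h10
    _ < 5 := h5
    _ ≤ (j:ℝ)+5 := h11

lemma u_lt_bound {u : ℝ} (hu : Tmap (j+5) u = u) (h0 : 0 < u) :
    u < 1 - 1/((j:ℝ)+5) := by
  have hK : (0:ℝ) < (j:ℝ)+5 := by positivity
  have h4 : (0:ℝ) < (j:ℝ)+4 := by positivity
  obtain ⟨a, hadef⟩ : ∃ a : ℝ, a = 1 - 1/((j:ℝ)+5) := ⟨_, rfl⟩
  rw [← hadef]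
  have ha0 : 0 < a := by
    rw [hadef, sub_pos]
    rw [div_lt_one hK]
    linarith
  have ha : a = 1/(1+1/((j:ℝ)+4)) := by
    rw [hadef]
    field_simp
    ring
  have hpow : 1/((j:ℝ)+5) < a^(j+6) := by
    rw [ha, div_pow, one_pow]
    apply one_div_lt_one_div_of_lt
    · positivity
    · exact pow_bound j
  have hTa : Tmap (j+5) a < a := by
    rw [Tmap, div_lt_iff₀ (one_add_pow_pos j ha0.le)]
    have he : a*(1+a^(j+5)) = a + a^(j+6) := by ring
    rw [he]
    have : a + 1/((j:ℝ)+5) = 1 := by rw [hadef]; ring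
    linarith
  by_contra hcon
  push_neg at hcon
  rcases eq_or_lt_of_le hcon with heq | hlt
  · rw [heq] at hTa
    rw [hu] at hTa
    exact lt_irrefl _ hTa
  · have := Tmap_anti j ha0.le hlt
    rw [hu] at this
    linarith

lemma fixed_aux {u : ℝ} (hu : Tmap (j+5) u = u) (h0 : 0 < u) :
    u * (1+u^(j+5)) = 1 := by
  have hw := one_add_pow_pos j h0.le
  rw [Tmap, div_eq_iff hw.ne'] at hu
  linear_combination -hu

lemma Sd_u_gt_one {u : ℝ} (hu : Tmap (j+5) u = u) (h0 : 0 < u) : 1 < Sd j u := by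
  have hK : (0:ℝ) < (j:ℝ)+5 := by positivity
  have hw := one_add_pow_pos j h0.le
  have h1 := fixed_aux j hu h0
  have h2 : u^(j+6) = 1 - u := by linear_combination h1
  have h4 : (1:ℝ)+u^(j+5) = 1/u := by
    rw [eq_div_iff h0.ne']
    linear_combination h1
  have h3 : ((1+u^(j+5))^(j+5)+1) = 1/u^(j+6) := by
    rw [h4, div_pow, one_pow, eq_div_iff (pow_ne_zero _ h0.ne')]
    have hne : u^(j+5) ≠ 0 := pow_ne_zero _ h0.ne'
    field_simp
    linear_combination (u^(j+5)) * h2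
  have e : Sd j u = (((j:ℝ)+5)*u^(j+6))^2 := by
    rw [Sd, h1, one_pow, mul_one, h3]
    have hne : u^(j+6) ≠ 0 := pow_ne_zero _ h0.ne'
    field_simp
  rw [h2] at e
  have hgt : 1 < ((j:ℝ)+5)*(1-u) := by
    have hb := u_lt_bound j hu h0
    have h5 : 1/((j:ℝ)+5) < 1-u := by linarith
    have h6 := (div_lt_iff₀ hK).mp h5
    nlinarith
  rw [e]
  nlinarith

/-! ### Uniqueness of fixed points of `S` via strict convexity -/

lemma mvt_Sd {a b : ℝ} (h0 : 0 < a) (hab : a < b) (hfix : S j b - S j a = b - a) :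
    ∃ ξ ∈ Ioo a b, Sd j ξ = 1 := by
  have hcont : ContinuousOn (S j) (Icc a b) := fun x hx =>
    (hasDerivAt_S j (h0.le.trans hx.1)).continuousAt.continuousWithinAt
  obtain ⟨c, hc, hc2⟩ := exists_hasDerivAt_eq_slope (S j) (Sd j) hab hcont
    (fun x hx => hasDerivAt_S j (h0.trans hx.1).le)
  refine ⟨c, hc, ?_⟩
  rw [hc2, hfix, div_self (sub_ne_zero.2 hab.ne')]

lemma convex_contra {ξ₁ ξ₂ ξ₃ : ℝ} (h1 : ξ₁ ∈ Ioo (0:ℝ) 1) (h3 : ξ₃ ∈ Ioo (0:ℝ) 1)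
    (h12 : ξ₁ < ξ₂) (h23 : ξ₂ < ξ₃)
    (hv1 : vfun j ξ₁ ≤ (j:ℝ)+5) (hv3 : vfun j ξ₃ ≤ (j:ℝ)+5)
    (hstrict : vfun j ξ₁ < (j:ℝ)+5 ∨ vfun j ξ₃ < (j:ℝ)+5) :
    vfun j ξ₂ < (j:ℝ)+5 := by
  have hd : (0:ℝ) < ξ₃ - ξ₁ := by linarith
  have hlam : 0 < (ξ₃ - ξ₂)/(ξ₃ - ξ₁) := by apply div_pos <;> linarith
  have hmu : 0 < (ξ₂ - ξ₁)/(ξ₃ - ξ₁) := by apply div_pos <;> linarith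
  have hsum : (ξ₃ - ξ₂)/(ξ₃ - ξ₁) + (ξ₂ - ξ₁)/(ξ₃ - ξ₁) = 1 := by
    field_simp
    ring
  have hcomb : ((ξ₃ - ξ₂)/(ξ₃ - ξ₁)) • ξ₁ + ((ξ₂ - ξ₁)/(ξ₃ - ξ₁)) • ξ₃ = ξ₂ := by
    simp only [smul_eq_mul]
    field_simp
    ring
  have hconv := (strictConvexOn_v j).2 h1 h3 (by linarith : ξ₁ ≠ ξ₃) hlam hmu hsum
  rw [hcomb] at hconv
  simp only [smul_eq_mul] at hconv
  have hK : vfun j ξ₂ < ((ξ₃ - ξ₂)/(ξ₃ - ξ₁)) * vfun j ξ₁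
      + ((ξ₂ - ξ₁)/(ξ₃ - ξ₁)) * vfun j ξ₃ := hconv
  rcases hstrict with hs | hs
  · nlinarith
  · nlinarith

lemma no_two_fixed_below {u a b : ℝ} (hu1 : u < 1) (hSu : S j u = u)
    (hu : Tmap (j+5) u = u)
    (ha0 : 0 < a) (hab : a < b) (hbu : b < u)
    (hSa : S j a = a) (hSb : S j b = b) : False := by
  have h0u : 0 < u := by linarith
  have hSdu := Sd_u_gt_one j hu h0u
  obtain ⟨ξ₁, hξ₁, hv₁⟩ := mvt_Sd j ha0 hab (by rw [hSa, hSb])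
  obtain ⟨ξ₂, hξ₂, hv₂⟩ := mvt_Sd j (ha0.trans hab) hbu (by rw [hSb, hSu])
  have hm1 : ξ₁ ∈ Ioo (0:ℝ) 1 := ⟨by linarith [hξ₁.1], by linarith [hξ₁.2]⟩
  have hm2 : ξ₂ ∈ Ioo (0:ℝ) 1 := ⟨by linarith [hξ₂.1], by linarith [hξ₂.2]⟩
  have hmu : u ∈ Ioo (0:ℝ) 1 := ⟨h0u, hu1⟩
  have e1 : vfun j ξ₁ = (j:ℝ)+5 := vfun_eq_of_Sd_one j hm1.1 hv₁
  have e2 : vfun j ξ₂ = (j:ℝ)+5 := vfun_eq_of_Sd_one j hm2.1 hv₂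
  have e3 : vfun j u < (j:ℝ)+5 := vfun_lt_of_Sd_gt_one j h0u hSdu
  have := convex_contra j hm1 hmu (by linarith [hξ₁.2, hξ₂.1] : ξ₁ < ξ₂) hξ₂.2
    (le_of_eq e1) (le_of_lt e3) (Or.inr e3)
  rw [e2] at this
  exact lt_irrefl _ this

lemma no_two_fixed_above {u a b : ℝ} (hu1 : u < 1) (hSu : S j u = u)
    (hu : Tmap (j+5) u = u) (h0u : 0 < u)
    (hua : u < a) (hab : a < b) (hb1 : b < 1)
    (hSa : S j a = a) (hSb : S j b = b) : False := by
  have hSdu := Sd_u_gt_one j hu h0u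
  obtain ⟨ξ₁, hξ₁, hv₁⟩ := mvt_Sd j h0u hua (by rw [hSa, hSu])
  obtain ⟨ξ₂, hξ₂, hv₂⟩ := mvt_Sd j (h0u.trans hua) hab (by rw [hSa, hSb])
  have hm1 : ξ₁ ∈ Ioo (0:ℝ) 1 := ⟨by linarith [hξ₁.1], by linarith [hξ₁.2]⟩
  have hm2 : ξ₂ ∈ Ioo (0:ℝ) 1 := ⟨by linarith [hξ₂.1], by linarith [hξ₂.2]⟩
  have hmu : u ∈ Ioo (0:ℝ) 1 := ⟨h0u, hu1⟩
  have e1 : vfun j ξ₁ = (j:ℝ)+5 := vfun_eq_of_Sd_one j hm1.1 hv₁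
  have e2 : vfun j ξ₂ = (j:ℝ)+5 := vfun_eq_of_Sd_one j hm2.1 hv₂
  have e3 : vfun j u < (j:ℝ)+5 := vfun_lt_of_Sd_gt_one j h0u hSdu
  have := convex_contra j hmu hm2 (by linarith [hξ₁.1, hξ₁.2] : u < ξ₁)
    (by linarith [hξ₁.2, hξ₂.1] : ξ₁ < ξ₂) (le_of_lt e3) (le_of_eq e2) (Or.inl e3)
  rw [e1] at this
  exact lt_irrefl _ this

/-! ### Existence of points where `S x < x` (below `u`) and `S x > x` (above `u`) -/

lemma Sd_continuousAt {x : ℝ} (hx : 0 ≤ x) : ContinuousAt (Sd j) x := by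
  apply ContinuousAt.div
  · fun_prop
  · fun_prop
  · have := one_add_pow_pos j hx
    positivity

lemma exists_below {u lo : ℝ} (hu : Tmap (j+5) u = u) (h0 : 0 < u) (hu1 : u < 1)
    (hSu : S j u = u) (hlo : lo < u) :
    ∃ x, lo < x ∧ x < u ∧ S j x < x := by
  have hSdu := Sd_u_gt_one j hu h0
  have hev : {y | 1 < Sd j y} ∈ nhds u := (Sd_continuousAt j h0.le) (Ioi_mem_nhds hSdu)
  obtain ⟨ε, hε, hball⟩ := Metric.mem_nhds_iff.1 hev
  obtain ⟨x, hxdef⟩ : ∃ x : ℝ, x = max ((max lo 0 + u)/2) (u - ε/2) := ⟨_, rfl⟩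
  have hA := le_max_left lo 0
  have hB := le_max_right lo 0
  have hmaxu : max lo 0 < u := max_lt hlo h0
  have hx1 : lo < x := by
    rw [hxdef]
    have : lo < (max lo 0 + u)/2 := by linarith
    exact lt_of_lt_of_le this (le_max_left _ _)
  have hx0 : 0 < x := by
    rw [hxdef]
    have : 0 < (max lo 0 + u)/2 := by linarith
    exact lt_of_lt_of_le this (le_max_left _ _)
  have hxu : x < u := by
    rw [hxdef]
    apply max_lt
    · linarith
    · linarith
  have hxball : u - x < ε := by
    rw [hxdef]
    have := le_max_right ((max lo 0 + u)/2) (u - ε/2)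
    linarith
  have hcont : ContinuousOn (S j) (Icc x u) := fun y hy =>
    (hasDerivAt_S j (hx0.le.trans hy.1)).continuousAt.continuousWithinAt
  obtain ⟨ξ, hξ, heq⟩ := exists_hasDerivAt_eq_slope (S j) (Sd j) hxu hcont
    (fun y hy => hasDerivAt_S j (hx0.trans hy.1).le)
  have hξball : 1 < Sd j ξ := by
    apply hball
    rw [Metric.mem_ball, Real.dist_eq, abs_lt]
    constructor
    · linarith [hξ.1]
    · linarith [hξ.2]
  rw [heq, hSu] at hξball
  have hd : (0:ℝ) < u - x := by linarith
  rw [lt_div_iff₀ hd] at hξball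
  exact ⟨x, hx1, hxu, by linarith⟩

lemma exists_above {u : ℝ} (hu : Tmap (j+5) u = u) (h0 : 0 < u) {hi : ℝ}
    (hu1 : u < 1) (hSu : S j u = u) (hhi : u < hi) :
    ∃ x, u < x ∧ x < hi ∧ x < S j x := by
  have hSdu := Sd_u_gt_one j hu h0
  have hev : {y | 1 < Sd j y} ∈ nhds u := (Sd_continuousAt j h0.le) (Ioi_mem_nhds hSdu)
  obtain ⟨ε, hε, hball⟩ := Metric.mem_nhds_iff.1 hev
  obtain ⟨x, hxdef⟩ : ∃ x : ℝ, x = min ((u + hi)/2) (u + ε/2) := ⟨_, rfl⟩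
  have hux : u < x := by
    rw [hxdef]
    apply lt_min <;> linarith
  have hxhi : x < hi := by
    rw [hxdef]
    exact lt_of_le_of_lt (min_le_left _ _) (by linarith)
  have hxball : x - u < ε := by
    rw [hxdef]
    have := min_le_right ((u + hi)/2) (u + ε/2)
    linarith
  have hcont : ContinuousOn (S j) (Icc u x) := fun y hy =>
    (hasDerivAt_S j (h0.le.trans hy.1)).continuousAt.continuousWithinAt
  obtain ⟨ξ, hξ, heq⟩ := exists_hasDerivAt_eq_slope (S j) (Sd j) hux hcont
    (fun y hy => hasDerivAt_S j (h0.trans hy.1).le)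
  have hξball : 1 < Sd j ξ := by
    apply hball
    rw [Metric.mem_ball, Real.dist_eq, abs_lt]
    constructor
    · linarith [hξ.1]
    · linarith [hξ.2]
  rw [heq, hSu] at hξball
  have hd : (0:ℝ) < x - u := by linarith
  rw [lt_div_iff₀ hd] at hξball
  exact ⟨x, hux, hxhi, by linarith⟩

/-! ### Existence of the 2-cycle and classification of fixed points of `S` -/

lemma S_zero : S j 0 = 1/2 := by
  have h1 : Tmap (j+5) 0 = 1 := by
    rw [Tmap, zero_pow (by omega : j+5 ≠ 0)]
    norm_num
  rw [S, h1, Tmap, one_pow]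
  norm_num

lemma S_one_lt : S j 1 < 1 := by
  have h1 : Tmap (j+5) 1 = 1/2 := by rw [Tmap, one_pow]; norm_num
  rw [S, h1]
  exact Tmap_lt_one j (by norm_num)

lemma exists_p₁ {u : ℝ} (hu : Tmap (j+5) u = u) (h0 : 0 < u) (hu1 : u < 1)
    (hSu : S j u = u) :
    ∃ p₁, 0 < p₁ ∧ p₁ < u ∧ S j p₁ = p₁ := by
  obtain ⟨x₀, hx₀0, hx₀u, hSx₀⟩ := exists_below j hu h0 hu1 hSu
    (show (0:ℝ) < u from h0)
  have hcont : ContinuousOn (fun x => S j x - x) (Icc 0 x₀) := fun y hy =>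
    ((hasDerivAt_S j hy.1).continuousAt.sub continuousAt_id).continuousWithinAt
  have hmem : (0:ℝ) ∈ Ioo ((fun x => S j x - x) x₀) ((fun x => S j x - x) 0) := by
    constructor
    · simpa using sub_neg.2 hSx₀
    · simp [S_zero]
  obtain ⟨p₁, hp₁, hp₁2⟩ := intermediate_value_Ioo' hx₀0.le hcont hmem
  have h2 : S j p₁ - p₁ = 0 := hp₁2
  exact ⟨p₁, hp₁.1, by linarith [hp₁.2], by linarith⟩

lemma exists_p₂ {u : ℝ} (hu : Tmap (j+5) u = u) (h0 : 0 < u) (hu1 : u < 1)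
    (hSu : S j u = u) :
    ∃ p₂, u < p₂ ∧ p₂ < 1 ∧ S j p₂ = p₂ := by
  obtain ⟨x₁, hx₁u, hx₁1, hSx₁⟩ := exists_above j hu h0 hu1 hSu hu1
  have hx₁0 : 0 < x₁ := h0.trans hx₁u
  have hcont : ContinuousOn (fun x => S j x - x) (Icc x₁ 1) := fun y hy =>
    ((hasDerivAt_S j (hx₁0.le.trans hy.1)).continuousAt.sub continuousAt_id).continuousWithinAt
  have hmem : (0:ℝ) ∈ Ioo ((fun x => S j x - x) 1) ((fun x => S j x - x) x₁) := by
    constructor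
    · simpa using sub_neg.2 (S_one_lt j)
    · simpa using sub_pos.2 hSx₁
  obtain ⟨p₂, hp₂, hp₂2⟩ := intermediate_value_Ioo' hx₁1.le hcont hmem
  have h2 : S j p₂ - p₂ = 0 := hp₂2
  exact ⟨p₂, by linarith [hp₂.1], hp₂.2, by linarith⟩

lemma fixed_classify {u p₁ p₂ : ℝ} (hu : Tmap (j+5) u = u) (hu1 : u < 1)
    (hSu : S j u = u)
    (hp₁0 : 0 < p₁) (hp₁u : p₁ < u) (hSp₁ : S j p₁ = p₁)
    (hup₂ : u < p₂) (hp₂1 : p₂ < 1) (hSp₂ : S j p₂ = p₂)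
    {z : ℝ} (hz : z ∈ Icc (0:ℝ) 1) (hSz : S j z = z) :
    z = p₁ ∨ z = u ∨ z = p₂ := by
  have h0u : 0 < u := hp₁0.trans hp₁u
  have hz0 : 0 < z := by
    have h := Tmap_pos j (Tmap_mem j hz).1
    rw [← S] at h
    rwa [hSz] at h
  have hz1 : z < 1 := by
    have h : S j z < 1 := Tmap_lt_one j (Tmap_pos j hz.1)
    rwa [hSz] at h
  rcases lt_trichotomy z u with h|h|h
  · rcases lt_trichotomy z p₁ with g|g|g
    · exact (no_two_fixed_below j hu1 hSu hu hz0 g hp₁u hSz hSp₁).elim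
    · exact Or.inl g
    · exact (no_two_fixed_below j hu1 hSu hu hp₁0 g h hSp₁ hSz).elim
  · exact Or.inr (Or.inl h)
  · rcases lt_trichotomy z p₂ with g|g|g
    · exact (no_two_fixed_above j hu1 hSu hu h0u h g hp₂1 hSz hSp₂).elim
    · exact Or.inr (Or.inr g)
    · exact (no_two_fixed_above j hu1 hSu hu h0u hup₂ g hz1 hSp₂ hSz).elim

lemma S_lt_between {u p₁ p₂ : ℝ} (hu : Tmap (j+5) u = u) (hu1 : u < 1)
    (hSu : S j u = u)
    (hp₁0 : 0 < p₁) (hp₁u : p₁ < u) (hSp₁ : S j p₁ = p₁)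
    (hup₂ : u < p₂) (hp₂1 : p₂ < 1) (hSp₂ : S j p₂ = p₂)
    {y : ℝ} (hy : y ∈ Ioo p₁ u) : S j y < y := by
  rcases lt_trichotomy (S j y) y with h|h|h
  · exact h
  · have := fixed_classify j hu hu1 hSu hp₁0 hp₁u hSp₁ hup₂ hp₂1 hSp₂
      (⟨(hp₁0.trans hy.1).le, by linarith [hy.2]⟩ : y ∈ Icc (0:ℝ) 1) h
    rcases this with g|g|g
    · exact absurd g (by linarith [hy.1])
    · exact absurd g (by linarith [hy.2])
    · exact absurd g (by linarith [hy.2])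
  · exfalso
    have hy0 : 0 < y := hp₁0.trans hy.1
    have h0u : 0 < u := hy0.trans hy.2
    obtain ⟨x₀, hx₀y, hx₀u, hSx₀⟩ := exists_below j hu h0u hu1 hSu hy.2
    have hcont : ContinuousOn (fun x => S j x - x) (Icc y x₀) := fun z hz =>
      ((hasDerivAt_S j (hy0.le.trans hz.1)).continuousAt.sub continuousAt_id).continuousWithinAt
    have hmem : (0:ℝ) ∈ Ioo ((fun x => S j x - x) x₀) ((fun x => S j x - x) y) := by
      constructor
      · simpa using sub_neg.2 hSx₀
      · simpa using sub_pos.2 h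
    obtain ⟨z, hz, hz2⟩ := intermediate_value_Ioo' hx₀y.le hcont hmem
    have hz3 : S j z - z = 0 := hz2
    have hcls := fixed_classify j hu hu1 hSu hp₁0 hp₁u hSp₁ hup₂ hp₂1 hSp₂
      (⟨(hy0.trans hz.1).le, by linarith [hz.2, hx₀u]⟩ : z ∈ Icc (0:ℝ) 1) (by linarith)
    rcases hcls with g|g|g
    · exact absurd g (by linarith [hz.1, hy.1])
    · exact absurd g (by linarith [hz.2])
    · exact absurd g (by linarith [hz.2])

lemma S_gt_between {u p₁ p₂ : ℝ} (hu : Tmap (j+5) u = u) (hu1 : u < 1)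
    (hSu : S j u = u)
    (hp₁0 : 0 < p₁) (hp₁u : p₁ < u) (hSp₁ : S j p₁ = p₁)
    (hup₂ : u < p₂) (hp₂1 : p₂ < 1) (hSp₂ : S j p₂ = p₂)
    {y : ℝ} (hy : y ∈ Ioo u p₂) : y < S j y := by
  have h0u : 0 < u := hp₁0.trans hp₁u
  have hy0 : 0 < y := h0u.trans hy.1
  have hy1 : y < 1 := hy.2.trans hp₂1
  rcases lt_trichotomy (S j y) y with h|h|h
  · exfalso
    obtain ⟨x₁, hux₁, hx₁y, hSx₁⟩ := exists_above j hu h0u hu1 hSu hy.1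
    have hx₁0 : 0 < x₁ := h0u.trans hux₁
    have hcont : ContinuousOn (fun x => S j x - x) (Icc x₁ y) := fun z hz =>
      ((hasDerivAt_S j (hx₁0.le.trans hz.1)).continuousAt.sub continuousAt_id).continuousWithinAt
    have hmem : (0:ℝ) ∈ Ioo ((fun x => S j x - x) y) ((fun x => S j x - x) x₁) := by
      constructor
      · simpa using sub_neg.2 h
      · simpa using sub_pos.2 hSx₁
    obtain ⟨z, hz, hz2⟩ := intermediate_value_Ioo' hx₁y.le hcont hmem
    have hz3 : S j z - z = 0 := hz2
    have hcls := fixed_classify j hu hu1 hSu hp₁0 hp₁u hSp₁ hup₂ hp₂1 hSp₂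
      (⟨(hx₁0.trans hz.1).le, by linarith [hz.2]⟩ : z ∈ Icc (0:ℝ) 1) (by linarith)
    rcases hcls with g|g|g
    · exact absurd g (by linarith [hz.1])
    · exact absurd g (by linarith [hz.1])
    · exact absurd g (by linarith [hz.2, hy.2])
  · exfalso
    have hcls := fixed_classify j hu hu1 hSu hp₁0 hp₁u hSp₁ hup₂ hp₂1 hSp₂
      (⟨hy0.le, hy1.le⟩ : y ∈ Icc (0:ℝ) 1) h
    rcases hcls with g|g|g
    · exact absurd g (by linarith [hy.1])
    · exact absurd g (by linarith [hy.1])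
    · exact absurd g (by linarith [hy.2])
  · exact h

/-! ### Orbit convergence -/

section Orbit

variable {u p₁ p₂ : ℝ} (hu : Tmap (j+5) u = u) (hu1 : u < 1)
  (hSu : S j u = u)
  (hp₁0 : 0 < p₁) (hp₁u : p₁ < u) (hSp₁ : S j p₁ = p₁)
  (hup₂ : u < p₂) (hp₂1 : p₂ < 1) (hSp₂ : S j p₂ = p₂)

include hu hu1 hSu hp₁0 hp₁u hSp₁ hup₂ hp₂1 hSp₂

lemma orbit_below {x : ℝ} (hx : x ∈ Icc (0:ℝ) 1) (hxu : x < u) :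
    Tendsto (fun n => (S j)^[n] x) atTop (nhds p₁) := by
  have h0u : 0 < u := hp₁0.trans hp₁u
  obtain ⟨seq, hseqdef⟩ : ∃ seq : ℕ → ℝ, seq = fun n => (S j)^[n] x := ⟨_, rfl⟩
  rw [← hseqdef]
  have hseq : ∀ n, seq (n+1) = S j (seq n) := by
    intro n; rw [hseqdef]; exact Function.iterate_succ_apply' _ _ _
  have hseq0 : seq 0 = x := by rw [hseqdef]; rfl
  have hmem : ∀ n, seq n ∈ Icc (0:ℝ) 1 := by
    intro n; induction n with
    | zero => rw [hseq0]; exact hx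
    | succ n ih => rw [hseq n]; exact S_mem j ih
  have hlt : ∀ n, seq n < u := by
    intro n; induction n with
    | zero => rw [hseq0]; exact hxu
    | succ n ih =>
      rw [hseq n]
      calc S j (seq n) < S j u := S_mono j (hmem n) ih hu1.le
        _ = u := hSu
  have hfix_of : ∀ L, L ∈ Icc (0:ℝ) 1 → Tendsto seq atTop (nhds L) → S j L = L := by
    intro L hLmem hL
    have h1 : Tendsto (fun n => seq (n+1)) atTop (nhds L) :=
      hL.comp (tendsto_add_atTop_nat 1)
    have h2 : Tendsto (fun n => S j (seq n)) atTop (nhds (S j L)) :=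
      ((hasDerivAt_S j hLmem.1).continuousAt.tendsto).comp hL
    have h3 : (fun n => seq (n+1)) = fun n => S j (seq n) := funext hseq
    rw [h3] at h1
    exact (tendsto_nhds_unique h1 h2).symm
  rcases le_total x (S j x) with hmono | hanti
  · have step : ∀ n, seq n ≤ seq (n+1) := by
      intro n; induction n with
      | zero => rw [hseq 0, hseq0]; exact hmono
      | succ n ih =>
        have hle : S j (seq n) ≤ S j (seq (n+1)) := by
          rcases eq_or_lt_of_le ih with he | hl
          · rw [he]
          · exact (S_mono j (hmem n) hl (hmem (n+1)).2).le
        calc seq (n+1) = S j (seq n) := hseq n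
          _ ≤ S j (seq (n+1)) := hle
          _ = seq (n+2) := (hseq (n+1)).symm
    have mono : Monotone seq := monotone_nat_of_le_succ step
    have bdd : BddAbove (Set.range seq) := ⟨1, by rintro y ⟨n, rfl⟩; exact (hmem n).2⟩
    have hL : Tendsto seq atTop (nhds (⨆ n, seq n)) := tendsto_atTop_ciSup mono bdd
    set L := ⨆ n, seq n with hLdef
    have hLmem : L ∈ Icc (0:ℝ) 1 := isClosed_Icc.mem_of_tendsto hL (Eventually.of_forall hmem)
    have hLle : L ≤ u := le_of_tendsto' hL fun n => (hlt n).le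
    have hfixL : S j L = L := hfix_of L hLmem hL
    have hcls := fixed_classify j hu hu1 hSu hp₁0 hp₁u hSp₁ hup₂ hp₂1 hSp₂ hLmem hfixL
    have hLne : L ≠ u := by
      intro heq
      rw [heq] at hL
      have hev : ∀ᶠ n in atTop, seq n ∈ Ioi p₁ := hL (Ioi_mem_nhds hp₁u)
      obtain ⟨N, hN⟩ := hev.exists
      have hNmem : seq N ∈ Ioo p₁ u := ⟨hN, hlt N⟩
      have := S_lt_between j hu hu1 hSu hp₁0 hp₁u hSp₁ hup₂ hp₂1 hSp₂ hNmem
      rw [← hseq N] at this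
      exact absurd (step N) (not_le.2 this)
    rcases hcls with g|g|g
    · rwa [g] at hL
    · exact absurd g hLne
    · exact absurd g (by intro h; rw [h] at hLle; linarith)
  · have step : ∀ n, seq (n+1) ≤ seq n := by
      intro n; induction n with
      | zero => rw [hseq 0, hseq0]; exact hanti
      | succ n ih =>
        have hle : S j (seq (n+1)) ≤ S j (seq n) := by
          rcases eq_or_lt_of_le ih with he | hl
          · rw [he]
          · exact (S_mono j (hmem (n+1)) hl (hmem n).2).le
        calc seq (n+2) = S j (seq (n+1)) := hseq (n+1)
          _ ≤ S j (seq n) := hle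
          _ = seq (n+1) := (hseq n).symm
    have anti : Antitone seq := antitone_nat_of_succ_le step
    have bdd : BddBelow (Set.range seq) := ⟨0, by rintro y ⟨n, rfl⟩; exact (hmem n).1⟩
    have hL : Tendsto seq atTop (nhds (⨅ n, seq n)) := tendsto_atTop_ciInf anti bdd
    set L := ⨅ n, seq n with hLdef
    have hLmem : L ∈ Icc (0:ℝ) 1 := isClosed_Icc.mem_of_tendsto hL (Eventually.of_forall hmem)
    have hLx : L ≤ x := by
      have := ciInf_le bdd 0
      rwa [hseq0] at this
    have hfixL : S j L = L := hfix_of L hLmem hL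
    have hcls := fixed_classify j hu hu1 hSu hp₁0 hp₁u hSp₁ hup₂ hp₂1 hSp₂ hLmem hfixL
    rcases hcls with g|g|g
    · rwa [g] at hL
    · exact absurd g (by intro h; rw [h] at hLx; linarith)
    · exact absurd g (by intro h; rw [h] at hLx; linarith)

lemma orbit_above {x : ℝ} (hx : x ∈ Icc (0:ℝ) 1) (hxu : u < x) :
    Tendsto (fun n => (S j)^[n] x) atTop (nhds p₂) := by
  have h0u : 0 < u := hp₁0.trans hp₁u
  obtain ⟨seq, hseqdef⟩ : ∃ seq : ℕ → ℝ, seq = fun n => (S j)^[n] x := ⟨_, rfl⟩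
  rw [← hseqdef]
  have hseq : ∀ n, seq (n+1) = S j (seq n) := by
    intro n; rw [hseqdef]; exact Function.iterate_succ_apply' _ _ _
  have hseq0 : seq 0 = x := by rw [hseqdef]; rfl
  have hmem : ∀ n, seq n ∈ Icc (0:ℝ) 1 := by
    intro n; induction n with
    | zero => rw [hseq0]; exact hx
    | succ n ih => rw [hseq n]; exact S_mem j ih
  have hgt : ∀ n, u < seq n := by
    intro n; induction n with
    | zero => rw [hseq0]; exact hxu
    | succ n ih =>
      rw [hseq n]
      calc u = S j u := hSu.symm
        _ < S j (seq n) := S_mono j ⟨h0u.le, hu1.le⟩ ih (hmem n).2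
  have hfix_of : ∀ L, L ∈ Icc (0:ℝ) 1 → Tendsto seq atTop (nhds L) → S j L = L := by
    intro L hLmem hL
    have h1 : Tendsto (fun n => seq (n+1)) atTop (nhds L) :=
      hL.comp (tendsto_add_atTop_nat 1)
    have h2 : Tendsto (fun n => S j (seq n)) atTop (nhds (S j L)) :=
      ((hasDerivAt_S j hLmem.1).continuousAt.tendsto).comp hL
    have h3 : (fun n => seq (n+1)) = fun n => S j (seq n) := funext hseq
    rw [h3] at h1
    exact (tendsto_nhds_unique h1 h2).symm
  rcases le_total x (S j x) with hmono | hanti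
  · have step : ∀ n, seq n ≤ seq (n+1) := by
      intro n; induction n with
      | zero => rw [hseq 0, hseq0]; exact hmono
      | succ n ih =>
        have hle : S j (seq n) ≤ S j (seq (n+1)) := by
          rcases eq_or_lt_of_le ih with he | hl
          · rw [he]
          · exact (S_mono j (hmem n) hl (hmem (n+1)).2).le
        calc seq (n+1) = S j (seq n) := hseq n
          _ ≤ S j (seq (n+1)) := hle
          _ = seq (n+2) := (hseq (n+1)).symm
    have mono : Monotone seq := monotone_nat_of_le_succ step
    have bdd : BddAbove (Set.range seq) := ⟨1, by rintro y ⟨n, rfl⟩; exact (hmem n).2⟩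
    have hL : Tendsto seq atTop (nhds (⨆ n, seq n)) := tendsto_atTop_ciSup mono bdd
    set L := ⨆ n, seq n with hLdef
    have hLmem : L ∈ Icc (0:ℝ) 1 := isClosed_Icc.mem_of_tendsto hL (Eventually.of_forall hmem)
    have hLx : x ≤ L := by
      have := le_ciSup bdd 0
      rwa [hseq0] at this
    have hfixL : S j L = L := hfix_of L hLmem hL
    have hcls := fixed_classify j hu hu1 hSu hp₁0 hp₁u hSp₁ hup₂ hp₂1 hSp₂ hLmem hfixL
    rcases hcls with g|g|g
    · exact absurd g (by intro h; rw [h] at hLx; linarith)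
    · exact absurd g (by intro h; rw [h] at hLx; linarith)
    · rwa [g] at hL
  · have step : ∀ n, seq (n+1) ≤ seq n := by
      intro n; induction n with
      | zero => rw [hseq 0, hseq0]; exact hanti
      | succ n ih =>
        have hle : S j (seq (n+1)) ≤ S j (seq n) := by
          rcases eq_or_lt_of_le ih with he | hl
          · rw [he]
          · exact (S_mono j (hmem (n+1)) hl (hmem n).2).le
        calc seq (n+2) = S j (seq (n+1)) := hseq (n+1)
          _ ≤ S j (seq n) := hle
          _ = seq (n+1) := (hseq n).symm
    have anti : Antitone seq := antitone_nat_of_succ_le step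
    have bdd : BddBelow (Set.range seq) := ⟨0, by rintro y ⟨n, rfl⟩; exact (hmem n).1⟩
    have hL : Tendsto seq atTop (nhds (⨅ n, seq n)) := tendsto_atTop_ciInf anti bdd
    set L := ⨅ n, seq n with hLdef
    have hLmem : L ∈ Icc (0:ℝ) 1 := isClosed_Icc.mem_of_tendsto hL (Eventually.of_forall hmem)
    have hLge : u ≤ L := ge_of_tendsto' hL fun n => (hgt n).le
    have hfixL : S j L = L := hfix_of L hLmem hL
    have hcls := fixed_classify j hu hu1 hSu hp₁0 hp₁u hSp₁ hup₂ hp₂1 hSp₂ hLmem hfixL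
    have hLne : L ≠ u := by
      intro heq
      rw [heq] at hL
      have hev : ∀ᶠ n in atTop, seq n ∈ Iio p₂ := hL (Iio_mem_nhds hup₂)
      obtain ⟨N, hN⟩ := hev.exists
      have hNmem : seq N ∈ Ioo u p₂ := ⟨hgt N, hN⟩
      have := S_gt_between j hu hu1 hSu hp₁0 hp₁u hSp₁ hup₂ hp₂1 hSp₂ hNmem
      rw [← hseq N] at this
      exact absurd (step N) (not_le.2 this)
    rcases hcls with g|g|g
    · exact absurd g (by intro h; rw [h] at hLge; linarith)
    · exact absurd g hLne
    · rwa [g] at hL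

end Orbit

end TwoCycleAux


open TwoCycleAux

/-- For `k ≥ 5`, the map `T_k(x) = 1/(1+x^k)` on `[0,1]` has a unique fixed point `u_k`
and an attracting 2-cycle `{p₁, p₂}` with `0 < p₁ < u_k < p₂ < 1`: the even iterates of
every `x ∈ [0,1]` with `x ≠ u_k` converge to `p₁` or to `p₂`, and `u_k, p₁, p₂` are the
only periodic points of `T_k` in `[0,1]`. -/
theorem Tmap_attracting_two_cycle (k : ℕ) (hk : 5 ≤ k) :
    ∃ u p₁ p₂ : ℝ,
      u ∈ Set.Icc (0 : ℝ) 1 ∧ Tmap k u = u ∧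
      (∀ v ∈ Set.Icc (0 : ℝ) 1, Tmap k v = v → v = u) ∧
      0 < p₁ ∧ p₁ < u ∧ u < p₂ ∧ p₂ < 1 ∧
      Tmap k p₁ = p₂ ∧ Tmap k p₂ = p₁ ∧
      (∀ x ∈ Set.Icc (0 : ℝ) 1, x ≠ u →
        Tendsto (fun n : ℕ => (Tmap k)^[2 * n] x) atTop (nhds p₁) ∨
        Tendsto (fun n : ℕ => (Tmap k)^[2 * n] x) atTop (nhds p₂)) ∧
      (∀ x ∈ Set.Icc (0 : ℝ) 1, ∀ m : ℕ, 1 ≤ m → (Tmap k)^[m] x = x →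
        x = u ∨ x = p₁ ∨ x = p₂) := by

  obtain ⟨j, rfl⟩ : ∃ j, k = j + 5 := ⟨k - 5, by omega⟩
  obtain ⟨u, huIoo, hu⟩ := exists_fixed j
  have h0u : 0 < u := huIoo.1
  have hu1 : u < 1 := huIoo.2
  have hSu : S j u = u := by rw [S, hu, hu]
  obtain ⟨p₁, hp₁0, hp₁u, hSp₁⟩ := exists_p₁ j hu h0u hu1 hSu
  obtain ⟨p₂, hup₂, hp₂1, hSp₂⟩ := exists_p₂ j hu h0u hu1 hSu
  have hiter : ∀ x : ℝ, ∀ n : ℕ, (Tmap (j+5))^[2*n] x = (S j)^[n] x := by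
    intro x n
    rw [Function.iterate_mul]
    rfl
  -- Tmap p₁ = p₂
  have hTp₁mem : Tmap (j+5) p₁ ∈ Set.Icc (0:ℝ) 1 :=
    Tmap_mem j ⟨hp₁0.le, by linarith⟩
  have hTTp₁ : Tmap (j+5) (Tmap (j+5) p₁) = p₁ := hSp₁
  have hTp₁fix : S j (Tmap (j+5) p₁) = Tmap (j+5) p₁ := by
    show Tmap (j+5) (Tmap (j+5) (Tmap (j+5) p₁)) = _
    rw [hTTp₁]
  have hTp₁gt : u < Tmap (j+5) p₁ := by
    have := Tmap_anti j hp₁0.le hp₁u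
    rwa [hu] at this
  have hTp₁eq : Tmap (j+5) p₁ = p₂ := by
    rcases fixed_classify j hu hu1 hSu hp₁0 hp₁u hSp₁ hup₂ hp₂1 hSp₂ hTp₁mem hTp₁fix
      with g|g|g
    · exact absurd g (by intro h; rw [h] at hTp₁gt; linarith)
    · exact absurd g (by intro h; rw [h] at hTp₁gt; linarith)
    · exact g
  have hTp₂eq : Tmap (j+5) p₂ = p₁ := by rw [← hTp₁eq]; exact hTTp₁
  refine ⟨u, p₁, p₂, ⟨h0u.le, hu1.le⟩, hu, ?_, hp₁0, hp₁u, hup₂, hp₂1, hTp₁eq, hTp₂eq,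
    ?_, ?_⟩
  · -- uniqueness of the fixed point of T
    intro v hv hfv
    rcases lt_trichotomy v u with h|h|h
    · have := Tmap_anti j hv.1 h
      rw [hu, hfv] at this
      linarith
    · exact h
    · have := Tmap_anti j h0u.le h
      rw [hu, hfv] at this
      linarith
  · -- convergence of even iterates
    intro x hx hxu
    rcases lt_or_gt_of_ne hxu with h|h
    · left
      have htd := orbit_below j hu hu1 hSu hp₁0 hp₁u hSp₁ hup₂ hp₂1 hSp₂ hx h
      have he : (fun n : ℕ => (Tmap (j+5))^[2*n] x) = fun n => (S j)^[n] x :=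
        funext fun n => hiter x n
      rwa [he]
    · right
      have htd := orbit_above j hu hu1 hSu hp₁0 hp₁u hSp₁ hup₂ hp₂1 hSp₂ hx h
      have he : (fun n : ℕ => (Tmap (j+5))^[2*n] x) = fun n => (S j)^[n] x :=
        funext fun n => hiter x n
      rwa [he]
  · -- periodic points
    intro x hx m hm hfix
    by_cases hxu : x = u
    · exact Or.inl hxu
    have hsub : ∀ i : ℕ, (S j)^[m*i] x = x := by
      intro i
      calc (S j)^[m*i] x = (Tmap (j+5))^[2*(m*i)] x := (hiter x (m*i)).symm
        _ = ((Tmap (j+5))^[m])^[2*i] x := by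
            rw [show 2*(m*i) = m*(2*i) by ring, Function.iterate_mul]
        _ = x := Function.iterate_fixed hfix (2*i)
    have hmtop : Tendsto (fun i : ℕ => m*i) atTop atTop := by
      apply tendsto_atTop_mono (fun i => Nat.le_mul_of_pos_left i (by omega : 0 < m))
      exact tendsto_id
    have hconst : (fun i : ℕ => (S j)^[m*i] x) = fun _ => x := funext hsub
    rcases lt_or_gt_of_ne hxu with h|h
    · have htd := orbit_below j hu hu1 hSu hp₁0 hp₁u hSp₁ hup₂ hp₂1 hSp₂ hx h
      have h2 : Tendsto (fun i : ℕ => (S j)^[m*i] x) atTop (nhds p₁) := htd.comp hmtop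
      rw [hconst] at h2
      exact Or.inr (Or.inl (tendsto_nhds_unique tendsto_const_nhds h2))
    · have htd := orbit_above j hu hu1 hSu hp₁0 hp₁u hSp₁ hup₂ hp₂1 hSp₂ hx h
      have h2 : Tendsto (fun i : ℕ => (S j)^[m*i] x) atTop (nhds p₂) := htd.comp hmtop
      rw [hconst] at h2
      exact Or.inr (Or.inr (tendsto_nhds_unique tendsto_const_nhds h2))
end
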